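/- arXiv:1401.1243 — 6 statements merged into one kernel-verified Lean document; each statement's English description precedes it below -/
import Mathlib

section
/- For independent identically distributed real random variables X and Y, P(|X+Y| ≤ 1) < 2 · P(|X−Y| ≤ 1). -/
/-!
Let `x₁, …, xₙ` be reals and let `i` be an index whose window `[xᵢ, xᵢ + 1]` contains the most
points. The points `xⱼ` with `|xᵢ + xⱼ| ≤ 1` lie in two windows, each holding at most as many
points as the window of `xᵢ`, and all points of that window satisfy `|xᵢ - xⱼ| ≤ 1`. Removing `xᵢ`
and inducting, the number of ordered pairs with `|xᵢ + xⱼ| ≤ 1` is at most twice the number with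
`|xᵢ - xⱼ| ≤ 1`, plus `4n`. Averaging over an i.i.d. sample and letting `n → ∞` gives
`P(|X + Y| ≤ 1) ≤ 2 P(|X - Y| ≤ 1)`, and by homogeneity this holds for every finite measure.

Suppose equality holds for `ν`. Adding a small atom at `a` to `ν` and comparing first-order terms
gives `ν[-a - 1, -a + 1] ≤ 2 ν[a - 1, a + 1]` for every `a`, hence equality for `ν`-a.e. `a`.
If such an `x` lies in a window of length one of maximal mass, then the two windows adjacent to
`-x` have maximal mass too and `-x` is not an atom. Starting from the rightmost maximal window,
this puts all the mass of another maximal window on a point that is not an atom.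
-/

open MeasureTheory ProbabilityTheory Finset Metric Filter Topology
open scoped ENNReal

def sumStrip : Set (ℝ × ℝ) := {p | |p.1 + p.2| ≤ 1}

def diffStrip : Set (ℝ × ℝ) := {p | |p.1 - p.2| ≤ 1}

theorem measurableSet_sumStrip : MeasurableSet sumStrip :=
  measurableSet_le (by fun_prop) measurable_const

theorem measurableSet_diffStrip : MeasurableSet diffStrip :=
  measurableSet_le (by fun_prop) measurable_const

theorem mk_preimage_sumStrip (a : ℝ) : Prod.mk a ⁻¹' sumStrip = closedBall (-a) 1 := by
  ext y; simp [sumStrip, Real.dist_eq, add_comm]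

theorem swap_mk_preimage_sumStrip (a : ℝ) : (·, a) ⁻¹' sumStrip = closedBall (-a) 1 := by
  ext y; simp [sumStrip, Real.dist_eq]

theorem mk_preimage_diffStrip (a : ℝ) : Prod.mk a ⁻¹' diffStrip = closedBall a 1 := by
  ext y; simp [diffStrip, Real.dist_eq, abs_sub_comm]

theorem swap_mk_preimage_diffStrip (a : ℝ) : (·, a) ⁻¹' diffStrip = closedBall a 1 := by
  ext y; simp [diffStrip, Real.dist_eq]

section PairCount

variable {ι α : Type*} [DecidableEq ι]

open Classical in
noncomputable def pairCount (A : Set (α × α)) (x : ι → α) (s : Finset ι) : ℕ :=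
  #{p ∈ s.offDiag | (x p.1, x p.2) ∈ A}

open Classical in
theorem pairCount_insert {A : Set (α × α)} (hA : ∀ a b, (a, b) ∈ A ↔ (b, a) ∈ A)
    (x : ι → α) {s : Finset ι} {i : ι} (hi : i ∉ s) :
    pairCount A x (insert i s) = pairCount A x s + 2 * #{j ∈ s | (x i, x j) ∈ A} := by
  have hleft : #{p ∈ {i} ×ˢ s | (x p.1, x p.2) ∈ A} = #{j ∈ s | (x i, x j) ∈ A} := by
    rw [singleton_product, filter_map, card_map]; rfl
  have hright : #{p ∈ s ×ˢ {i} | (x p.1, x p.2) ∈ A} = #{j ∈ s | (x i, x j) ∈ A} := by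
    rw [product_singleton, filter_map, card_map]
    simp only [Function.comp_def, Function.Embedding.coeFn_mk, hA]
  rw [pairCount, pairCount, offDiag_insert hi, filter_union, filter_union,
    card_union_of_disjoint, card_union_of_disjoint, hleft, hright]
  · ring
  all_goals
    simp only [disjoint_left, mem_union, mem_filter, mem_offDiag, mem_product, mem_singleton]
    grind

end PairCount

section WindowCount

variable {ι : Type*} (x : ι → ℝ) (s : Finset ι)

open Classical in
noncomputable def windowCount (c : ℝ) : ℕ := #{j ∈ s | x j ∈ Set.Icc c (c + 1)}

theorem exists_forall_windowCount_le (hs : s.Nonempty) :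
    ∃ i ∈ s, ∀ c, windowCount x s c ≤ windowCount x s (x i) := by
  classical
  obtain ⟨i, hi, hmax⟩ := s.exists_max_image (fun i => windowCount x s (x i)) hs
  refine ⟨i, hi, fun c => ?_⟩
  rcases eq_empty_or_nonempty {j ∈ s | x j ∈ Set.Icc c (c + 1)} with hempty | hne
  · simp only [windowCount, hempty, card_empty, zero_le]
  -- the window starting at the leftmost point of a window contains it
  obtain ⟨j, hj, hjmin⟩ := exists_min_image _ x hne
  rw [mem_filter] at hj
  have hsub : {k ∈ s | x k ∈ Set.Icc c (c + 1)} ⊆ {k ∈ s | x k ∈ Set.Icc (x j) (x j + 1)} := by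
    intro k hk
    have hjk := hjmin k hk
    rw [mem_filter, Set.mem_Icc] at hk ⊢
    exact ⟨hk.1, hjk, by linarith [hj.2.1, hk.2.2]⟩
  exact (card_le_card hsub).trans (hmax j hj.1)

open Classical in
theorem card_sumStrip_le_of_forall_windowCount_le [DecidableEq ι] {i : ι}
    (hmax : ∀ c, windowCount x s c ≤ windowCount x s (x i)) :
    #{j ∈ s.erase i | (x i, x j) ∈ sumStrip}
      ≤ 2 * #{j ∈ s.erase i | (x i, x j) ∈ diffStrip} + 2 := by
  have hsum : #{j ∈ s.erase i | (x i, x j) ∈ sumStrip}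
      ≤ windowCount x s (-x i - 1) + windowCount x s (-x i) := by
    refine (card_le_card fun j hj => ?_).trans (card_union_le _ _)
    simp only [sumStrip, mem_filter, mem_erase, Set.mem_ofPred_eq, abs_le] at hj
    simp only [mem_union, mem_filter, Set.mem_Icc]
    rcases le_total (x j) (-x i) with h | h
    · exact Or.inl ⟨hj.1.2, by linarith, by linarith⟩
    · exact Or.inr ⟨hj.1.2, h, by linarith⟩
  have hdiff : windowCount x s (x i) ≤ #{j ∈ s.erase i | (x i, x j) ∈ diffStrip} + 1 := by
    refine (card_le_card fun j hj => ?_).trans (card_insert_le i _)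
    simp only [mem_filter, Set.mem_Icc] at hj
    simp only [diffStrip, mem_insert, mem_filter, mem_erase, Set.mem_ofPred_eq, abs_le]
    by_cases hji : j = i
    · exact Or.inl hji
    · exact Or.inr ⟨⟨hji, hj.1⟩, by linarith, by linarith⟩
  linarith [hmax (-x i - 1), hmax (-x i)]

theorem pairCount_sumStrip_le [DecidableEq ι] :
    pairCount sumStrip x s ≤ 2 * pairCount diffStrip x s + 4 * #s := by
  induction s using Finset.strongInduction with
  | H s ih =>
    rcases s.eq_empty_or_nonempty with rfl | hs
    · simp [pairCount]
    obtain ⟨i, hi, hmax⟩ := exists_forall_windowCount_le x s hs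
    have hsum := pairCount_insert (A := sumStrip)
      (fun a b => by simp only [sumStrip, Set.mem_ofPred_eq, add_comm]) x (s.notMem_erase i)
    have hdiff := pairCount_insert (A := diffStrip)
      (fun a b => by simp only [diffStrip, Set.mem_ofPred_eq, abs_sub_comm]) x (s.notMem_erase i)
    rw [insert_erase hi] at hsum hdiff
    have hcard := card_erase_add_one hi
    have := ih _ (erase_ssubset hi)
    have := card_sumStrip_le_of_forall_windowCount_le x s hmax
    omega

end WindowCount

theorem ENNReal.le_of_forall_natCast_mul_le_mul_add {a b c : ℝ≥0∞} (hc : c ≠ ∞)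
    (h : ∀ n : ℕ, n * a ≤ n * b + c) : a ≤ b := by
  by_contra! hlt
  obtain ⟨n, hn⟩ := ENNReal.exists_nat_mul_gt (tsub_pos_of_lt hlt).ne' hc
  rw [ENNReal.mul_sub fun _ _ => ENNReal.natCast_ne_top n] at hn
  exact hn.not_ge (tsub_le_iff_left.mpr (h n))

section Sampling

variable {ι α : Type*} [Fintype ι] [MeasurableSpace α] (ν : Measure α) [IsProbabilityMeasure ν]

theorem map_pi_prodMk_eval {i j : ι} (hij : i ≠ j) :
    (Measure.pi fun _ : ι => ν).map (fun ω => (ω i, ω j)) = ν.prod ν := by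
  have hindep : IndepFun (fun ω : ι → α => ω i) (fun ω => ω j) (Measure.pi fun _ => ν) :=
    (iIndepFun_pi (X := fun _ => id) fun _ => aemeasurable_id).indepFun hij
  rw [(indepFun_iff_map_prod_eq_prod_map_map (measurable_pi_apply i).aemeasurable
    (measurable_pi_apply j).aemeasurable).mp hindep, (measurePreserving_eval _ i).map_eq,
    (measurePreserving_eval _ j).map_eq]

theorem lintegral_pairCount [DecidableEq ι] {A : Set (α × α)} (hA : MeasurableSet A) :
    ∫⁻ ω, (pairCount A ω univ : ℝ≥0∞) ∂(Measure.pi fun _ : ι => ν)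
      = #(univ : Finset ι).offDiag * (ν.prod ν) A := by
  have hpair (p : ι × ι) : Measurable fun ω : ι → α => (ω p.1, ω p.2) := by fun_prop
  simp only [pairCount, card_filter, Nat.cast_sum, Nat.cast_ite, Nat.cast_one, Nat.cast_zero]
  rw [lintegral_finsetSum _ fun p _ =>
      Measurable.ite (hpair p hA) measurable_const measurable_const,
    ← nsmul_eq_mul, ← sum_const]
  refine sum_congr rfl fun p hp => ?_
  rw [← map_pi_prodMk_eval ν (mem_offDiag.mp hp).2.2, Measure.map_apply (hpair p) hA,
    ← lintegral_indicator_one (hpair p hA)]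
  rfl

end Sampling

theorem prod_sumStrip_le_of_isProbabilityMeasure (ν : Measure ℝ) [IsProbabilityMeasure ν] :
    (ν.prod ν) sumStrip ≤ 2 * (ν.prod ν) diffStrip := by
  refine ENNReal.le_of_forall_natCast_mul_le_mul_add (c := 4) (by simp) fun n => ?_
  have hoffDiag : (#(univ : Finset (Fin (n + 1))).offDiag : ℝ≥0∞) = (n + 1) * n := by
    rw [offDiag_card, card_univ, Fintype.card_fin,
      Nat.sub_eq_of_eq_add (by ring : (n + 1) * (n + 1) = (n + 1) * n + (n + 1))]
    push_cast; rfl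
  have hsample : ((n + 1) * n : ℝ≥0∞) * (ν.prod ν) sumStrip
      ≤ 2 * (((n + 1) * n : ℝ≥0∞) * (ν.prod ν) diffStrip) + 4 * (n + 1) := calc
    _ = ∫⁻ ω, (pairCount sumStrip ω univ : ℝ≥0∞) ∂(Measure.pi fun _ : Fin (n + 1) => ν) := by
      rw [lintegral_pairCount ν measurableSet_sumStrip, hoffDiag]
    _ ≤ ∫⁻ ω, 2 * (pairCount diffStrip ω univ : ℝ≥0∞) + 4 * (n + 1)
          ∂(Measure.pi fun _ : Fin (n + 1) => ν) := by
      refine lintegral_mono fun ω => ?_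
      dsimp only
      have := pairCount_sumStrip_le ω (univ : Finset (Fin (n + 1)))
      rw [card_univ, Fintype.card_fin] at this
      exact_mod_cast this
    _ = _ := by
      rw [lintegral_add_right _ measurable_const, lintegral_const_mul' _ _ (by simp),
        lintegral_pairCount ν measurableSet_diffStrip, hoffDiag, lintegral_const, measure_univ,
        mul_one]
  rw [← ENNReal.mul_le_mul_iff_right (a := (n + 1 : ℝ≥0∞)) (by simp) (by simp)]
  convert hsample using 1 <;> ring

theorem prod_sumStrip_le (μ : Measure ℝ) [IsFiniteMeasure μ] :
    (μ.prod μ) sumStrip ≤ 2 * (μ.prod μ) diffStrip := by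
  rcases eq_zero_or_neZero μ with rfl | _
  · simp
  obtain ⟨c, p, _, rfl⟩ : ∃ (c : ℝ≥0∞) (p : Measure ℝ), IsProbabilityMeasure p ∧ μ = c • p :=
    ⟨μ Set.univ, (μ Set.univ)⁻¹ • μ, inferInstance, by
      rw [smul_smul, ENNReal.mul_inv_cancel (NeZero.ne _) (measure_ne_top _ _), one_smul]⟩
  simp only [Measure.prod_smul_left, Measure.prod_smul_right, Measure.smul_apply, smul_eq_mul]
  calc _ ≤ c * (c * (2 * (p.prod p) diffStrip)) := by
        gcongr; exact prod_sumStrip_le_of_isProbabilityMeasure p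
    _ = _ := by ring

theorem prod_add_smul_dirac_apply {α : Type*} [MeasurableSpace α] (μ : Measure α) [SFinite μ]
    (a : α) (t : ℝ≥0∞) {A : Set (α × α)} (hA : MeasurableSet A) :
    ((μ + t • Measure.dirac a).prod (μ + t • Measure.dirac a)) A
      = (μ.prod μ) A + t * μ ((·, a) ⁻¹' A) + t * μ (Prod.mk a ⁻¹' A)
        + t * t * Measure.dirac (a, a) A := by
  simp only [Measure.prod_add, Measure.add_prod, Measure.prod_smul_left, Measure.prod_smul_right,
    Measure.dirac_prod_dirac]
  simp only [Measure.prod_dirac, Measure.dirac_prod, Measure.add_apply, Measure.smul_apply,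
    smul_eq_mul, Measure.map_apply measurable_prodMk_right hA,
    Measure.map_apply measurable_prodMk_left hA]
  ring

theorem measure_closedBall_neg_le_of_prod_sumStrip_eq (μ : Measure ℝ) [IsFiniteMeasure μ]
    (heq : (μ.prod μ) sumStrip = 2 * (μ.prod μ) diffStrip) (a : ℝ) :
    μ (closedBall (-a) 1) ≤ 2 * μ (closedBall a 1) := by
  refine ENNReal.le_of_forall_pos_le_add fun t ht _ => ?_
  have := Measure.smul_finite (Measure.dirac a) (ENNReal.coe_ne_top (r := t))
  have h := prod_sumStrip_le (μ + (t : ℝ≥0∞) • Measure.dirac a)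
  rw [prod_add_smul_dirac_apply μ a t measurableSet_sumStrip,
    prod_add_smul_dirac_apply μ a t measurableSet_diffStrip, mk_preimage_sumStrip,
    swap_mk_preimage_sumStrip, mk_preimage_diffStrip, swap_mk_preimage_diffStrip, heq,
    Measure.dirac_apply_of_mem (show (a, a) ∈ diffStrip by simp [diffStrip])] at h
  have h2t : (2 * t : ℝ≥0∞) * μ (closedBall (-a) 1)
      ≤ (2 * t : ℝ≥0∞) * (2 * μ (closedBall a 1) + t) := by
    have h' : 2 * (μ.prod μ) diffStrip + (2 * t * μ (closedBall (-a) 1)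
          + t * t * Measure.dirac (a, a) sumStrip)
        ≤ 2 * (μ.prod μ) diffStrip + 2 * t * (2 * μ (closedBall a 1) + t) := by
      convert h using 1 <;> ring
    exact le_self_add.trans ((ENNReal.add_le_add_iff_left (by finiteness)).mp h')
  exact (ENNReal.mul_le_mul_iff_right (mul_ne_zero two_ne_zero (by simpa using ht.ne'))
    (by finiteness)).mp h2t

theorem UpperSemicontinuous.exists_forall_le_of_isCompact {X β : Type*} [TopologicalSpace X]
    [LinearOrder β] {f : X → β} (hf : UpperSemicontinuous f) (x₀ : X)
    (hK : IsCompact {x | f x₀ ≤ f x}) : ∃ x, ∀ y, f y ≤ f x := by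
  obtain ⟨x, -, hx⟩ := (hf.upperSemicontinuousOn _).exists_isMaxOn ⟨x₀, le_refl (f x₀)⟩ hK
  refine ⟨x, fun y => ?_⟩
  by_cases hy : f x₀ ≤ f y
  · exact hx hy
  · exact (not_le.mp hy).le.trans (hx (le_refl (f x₀)))

section MeasureClosedBall

variable {X : Type*} [PseudoMetricSpace X] [MeasurableSpace X]

theorem upperSemicontinuous_measure_closedBall [OpensMeasurableSpace X] (μ : Measure X)
    [IsFiniteMeasure μ] (r : ℝ) : UpperSemicontinuous fun x => μ (closedBall x r) := by
  intro x y hy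
  have htend : Tendsto (fun r' => μ (closedBall x r')) (𝓝[>] r) (𝓝 (μ (closedBall x r))) := by
    rw [← biInter_gt_closedBall x r]
    exact tendsto_measure_biInter_gt (fun _ _ => measurableSet_closedBall.nullMeasurableSet)
      (fun _ _ _ h => closedBall_subset_closedBall h) ⟨r + 1, by linarith, measure_ne_top _ _⟩
  obtain ⟨r', hlt, hr'⟩ := ((htend.eventually (gt_mem_nhds hy)).and self_mem_nhdsWithin).exists
  filter_upwards [ball_mem_nhds x (sub_pos.mpr hr')] with x' hx'
  refine (measure_mono (closedBall_subset_closedBall' ?_)).trans_lt hlt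
  rw [mem_ball] at hx'
  linarith

theorem isBounded_setOf_le_measure_closedBall {μ : Measure X} (hμ : IsTightMeasureSet {μ})
    (r : ℝ) {ε : ℝ≥0∞} (hε : ε ≠ 0) : Bornology.IsBounded {x | ε ≤ μ (closedBall x r)} := by
  obtain ⟨δ, hδ, hδε⟩ := exists_between (pos_iff_ne_zero.mpr hε)
  obtain ⟨K, hK, hKμ⟩ := isTightMeasureSet_iff_exists_isCompact_measure_compl_le.mp hμ δ hδ
  have hnear (x : X) (hx : ε ≤ μ (closedBall x r)) : ∃ k ∈ K, dist x k ≤ r := by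
    by_contra! hfar
    have hsub : closedBall x r ⊆ Kᶜ := fun y hy hyK =>
      (hfar y hyK).not_ge (by rw [dist_comm]; exact hy)
    exact hδε.not_ge (hx.trans ((measure_mono hsub).trans (hKμ μ rfl)))
  refine isBounded_iff.mpr ⟨r + diam K + r, fun x hx y hy => ?_⟩
  obtain ⟨k, hk, hxk⟩ := hnear x hx
  obtain ⟨k', hk', hyk'⟩ := hnear y hy
  calc dist x y ≤ dist x k + dist k k' + dist k' y := dist_triangle4 x k k' y
    _ ≤ r + diam K + r := by
      gcongr
      · exact dist_le_diam_of_mem hK.isBounded hk hk'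
      · rwa [dist_comm]

theorem exists_measure_closedBall_pos [SecondCountableTopology X] (μ : Measure X) [NeZero μ]
    {r : ℝ} (hr : 0 < r) : ∃ x, 0 < μ (closedBall x r) := by
  by_contra! h
  refine NeZero.ne μ (Measure.measure_univ_eq_zero.mp ?_)
  exact measure_null_of_locally_null _ fun x _ => ⟨closedBall x r,
    mem_nhdsWithin_of_mem_nhds (closedBall_mem_nhds x hr), nonpos_iff_eq_zero.mp (h x)⟩

end MeasureClosedBall

theorem ae_measure_closedBall_neg_eq_of_prod_sumStrip_eq (μ : Measure ℝ) [IsFiniteMeasure μ]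
    (heq : (μ.prod μ) sumStrip = 2 * (μ.prod μ) diffStrip) :
    ∀ᵐ x ∂μ, μ (closedBall (-x) 1) = 2 * μ (closedBall x 1) := by
  have hsum : (μ.prod μ) sumStrip = ∫⁻ x, μ (closedBall (-x) 1) ∂μ := by
    simp_rw [Measure.prod_apply measurableSet_sumStrip, mk_preimage_sumStrip]
  have hdiff : (μ.prod μ) diffStrip = ∫⁻ x, μ (closedBall x 1) ∂μ := by
    simp_rw [Measure.prod_apply measurableSet_diffStrip, mk_preimage_diffStrip]
  have hmeas : Measurable fun x => μ (closedBall x 1) :=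
    (upperSemicontinuous_measure_closedBall μ 1).measurable
  refine ae_eq_of_ae_le_of_lintegral_le
    (.of_forall (measure_closedBall_neg_le_of_prod_sumStrip_eq μ heq)) ?_
    (hmeas.const_mul 2).aemeasurable ?_
  · rw [← hsum]; finiteness
  · rw [lintegral_const_mul _ hmeas, ← hdiff, ← heq, hsum]

theorem measure_closedBall_add_measure_singleton (μ : Measure ℝ) (y : ℝ) :
    μ (closedBall y 1) + μ {y}
      = μ (closedBall (y - 1 / 2) (1 / 2)) + μ (closedBall (y + 1 / 2) (1 / 2)) := by
  simp only [Real.closedBall_eq_Icc, show y - 1 / 2 - 1 / 2 = y - 1 by ring,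
    show y - 1 / 2 + 1 / 2 = y by ring, show y + 1 / 2 - 1 / 2 = y by ring,
    show y + 1 / 2 + 1 / 2 = y + 1 by ring]
  rw [← measure_union_add_inter _ measurableSet_Icc,
    Set.Icc_union_Icc_eq_Icc (by linarith) (by linarith),
    Set.Icc_inter_Icc_eq_singleton (by linarith) (by linarith)]

/-- `closedBall (-x) 1` is covered by the two windows adjacent to `-x`, which meet in `{-x}`, and
its measure `2 * μ (closedBall x 1)` is at least twice the maximal window measure. -/
theorem le_measure_closedBall_of_measure_closedBall_neg_eq (μ : Measure ℝ) [IsFiniteMeasure μ]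
    {c x : ℝ} (hmax : ∀ c', μ (closedBall c' (1 / 2)) ≤ μ (closedBall c (1 / 2)))
    (hx : x ∈ closedBall c (1 / 2)) (hgood : μ (closedBall (-x) 1) = 2 * μ (closedBall x 1)) :
    μ (closedBall c (1 / 2)) ≤ μ (closedBall (-x - 1 / 2) (1 / 2))
      ∧ μ (closedBall c (1 / 2)) ≤ μ (closedBall (-x + 1 / 2) (1 / 2))
      ∧ μ {-x} = 0 := by
  set S := μ (closedBall c (1 / 2))
  have hS : S ≠ ∞ := measure_ne_top _ _
  have hlow : S ≤ μ (closedBall x 1) := measure_mono <|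
    closedBall_subset_closedBall' (by rw [mem_closedBall, dist_comm] at hx; linarith)
  have h : S + S + μ {-x}
      ≤ μ (closedBall (-x - 1 / 2) (1 / 2)) + μ (closedBall (-x + 1 / 2) (1 / 2)) := by
    rw [← measure_closedBall_add_measure_singleton, hgood, two_mul]
    gcongr
  have h₁ := hmax (-x - 1 / 2)
  have h₂ := hmax (-x + 1 / 2)
  refine ⟨?_, ?_, ?_⟩
  · refine (ENNReal.add_le_add_iff_right hS).mp (le_self_add.trans (h.trans ?_))
    gcongr
  · refine (ENNReal.add_le_add_iff_left hS).mp (le_self_add.trans (h.trans ?_))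
    gcongr
  · have h₀ : S + S + μ {-x} ≤ S + S + 0 := by simpa using h.trans (add_le_add h₁ h₂)
    exact nonpos_iff_eq_zero.mp ((ENNReal.add_le_add_iff_left (by finiteness)).mp h₀)

theorem not_ae_measure_closedBall_neg_eq (μ : Measure ℝ) [IsFiniteMeasure μ] [NeZero μ] :
    ¬ ∀ᵐ x ∂μ, μ (closedBall (-x) 1) = 2 * μ (closedBall x 1) := by
  intro hgood
  set w : ℝ → ℝ≥0∞ := fun c => μ (closedBall c (1 / 2))
  have husc : UpperSemicontinuous w := upperSemicontinuous_measure_closedBall μ _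
  have hbdd (ε : ℝ≥0∞) (hε : ε ≠ 0) : Bornology.IsBounded {c | ε ≤ w c} :=
    isBounded_setOf_le_measure_closedBall isTightMeasureSet_singleton _ hε
  obtain ⟨c₁, hc₁⟩ := exists_measure_closedBall_pos μ one_half_pos
  obtain ⟨c₀, hc₀⟩ := husc.exists_forall_le_of_isCompact c₁
    (isCompact_of_isClosed_isBounded (husc.isClosed_preimage _) (hbdd _ hc₁.ne'))
  set S := w c₀
  have hS : S ≠ 0 := (hc₁.trans_le (hc₀ c₁)).ne'
  have hMbdd : BddAbove {c | S ≤ w c} := (hbdd S hS).bddAbove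
  set s₁ := sSup {c | S ≤ w c}
  have hs₁ : S ≤ w s₁ := (husc.isClosed_preimage S).csSup_mem ⟨c₀, le_refl S⟩ hMbdd
  have hmax {c} (hc : S ≤ w c) (c' : ℝ) : w c' ≤ w c := (hc₀ c').trans hc
  obtain ⟨x, hx, hgx⟩ := Measure.exists_mem_of_measure_ne_zero_of_ae
    (ne_bot_of_le_ne_bot hS hs₁) (ae_restrict_of_ae hgood)
  obtain ⟨hleft, -, hnull⟩ := le_measure_closedBall_of_measure_closedBall_neg_eq μ (hmax hs₁) hx hgx
  -- a good point `z` of the maximal window `[-x - 1, -x]` has `s₁ - 1/2 ≤ x ≤ -z ≤ s₁ - 1/2`,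
  -- so the whole window sits on the null point `-x`
  have hatom : w (-x - 1 / 2) ≤ μ {-x} := measure_mono_ae <| by
    filter_upwards [hgood] with z hgz (hz : z ∈ closedBall (-x - 1 / 2) (1 / 2))
    obtain ⟨-, hright, -⟩ :=
      le_measure_closedBall_of_measure_closedBall_neg_eq μ (hmax (hs₁.trans hleft)) hz hgz
    have hz₁ : -z + 1 / 2 ≤ s₁ := le_csSup hMbdd (hs₁.trans (hleft.trans hright))
    rw [mem_closedBall, Real.dist_eq, abs_le] at hx hz
    exact (by linarith : z = -x)
  exact hS (nonpos_iff_eq_zero.mp (hs₁.trans (hleft.trans (hatom.trans hnull.le))))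

theorem prod_sumStrip_lt (μ : Measure ℝ) [IsFiniteMeasure μ] [NeZero μ] :
    (μ.prod μ) sumStrip < 2 * (μ.prod μ) diffStrip :=
  (prod_sumStrip_le μ).lt_of_ne fun heq =>
    not_ae_measure_closedBall_neg_eq μ (ae_measure_closedBall_neg_eq_of_prod_sumStrip_eq μ heq)

theorem stmt0 {Ω : Type*} [MeasurableSpace Ω] (μ : Measure Ω) [IsProbabilityMeasure μ]
    (X Y : Ω → ℝ) (hX : Measurable X) (hY : Measurable Y)
    (hindep : IndepFun X Y μ) (hid : IdentDistrib X Y μ μ) :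
    μ {ω | |X ω + Y ω| ≤ 1} < 2 * μ {ω | |X ω - Y ω| ≤ 1} := by
  have hlaw : μ.map (fun ω => (X ω, Y ω)) = (μ.map X).prod (μ.map X) := by
    rw [(indepFun_iff_map_prod_eq_prod_map_map hX.aemeasurable hY.aemeasurable).mp hindep,
      hid.map_eq]
  have := Measure.isProbabilityMeasure_map (μ := μ) hX.aemeasurable
  have hsum : μ {ω | |X ω + Y ω| ≤ 1} = (μ.map X).prod (μ.map X) sumStrip := by
    rw [← hlaw, Measure.map_apply (hX.prodMk hY) measurableSet_sumStrip]; rfl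
  have hdiff : μ {ω | |X ω - Y ω| ≤ 1} = (μ.map X).prod (μ.map X) diffStrip := by
    rw [← hlaw, Measure.map_apply (hX.prodMk hY) measurableSet_diffStrip]; rfl
  rw [hsum, hdiff]
  exact prod_sumStrip_lt _
end

section
/- For all real numbers a, b with 0 < b ≤ a/2, and all i.i.d. real random variables X, Y, one has P(|X+Y| ≤ b) ≤ ⌈2b/a⌉ · P(|X−Y| ≤ a), i.e. P(|X+Y| ≤ b) ≤ P(|X−Y| ≤ a). -/
open MeasureTheory ProbabilityTheory
open scoped ENNReal

/-!
Let `ν` be the law of `X`, `T = {(x, v) | |x + v| ≤ b}`, `d x = ν (T_x)` and `r = √d`, so that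
`p := P(|X + Y| ≤ b) = ∫ d dν = ∫ r² dν`. As `T` is symmetric, AM-GM applied to
`r v / r x + r x / r v ≥ 2` on `T` gives `p ≤ ∫∫_T r v / r x = ∫ S r`, where
`S v = ∫ 1_T(x, v) / r x dν(x)`. Then `2 ∫ S r ≤ ∫ S² + ∫ r²`, and
`∫ S² = ∫∫ ν(T_x ∩ T_y) / (r x r y) dν(x) dν(y)`: the integrand is at most `1` because
`ν(T_x ∩ T_y) ≤ min (d x) (d y)`, and vanishes unless `T_x ∩ T_y ≠ ∅`, which forces
`|x - y| ≤ 2b ≤ a`. Hence `2p ≤ P(|X - Y| ≤ a) + p`.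
-/

namespace ENNReal

lemma two_mul_le_add_sq (a b : ℝ≥0∞) : 2 * a * b ≤ a ^ 2 + b ^ 2 := by
  rcases eq_or_ne a ∞ with rfl | ha
  · simp
  rcases eq_or_ne b ∞ with rfl | hb
  · simp
  lift a to NNReal using ha
  lift b to NNReal using hb
  exact_mod_cast _root_.two_mul_le_add_sq a b

lemma two_le_inv_mul_add_inv_mul {s t : ℝ≥0∞} (hs₀ : s ≠ 0) (hs : s ≠ ∞) (ht₀ : t ≠ 0)
    (ht : t ≠ ∞) : 2 ≤ s⁻¹ * t + t⁻¹ * s := by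
  have hss := ENNReal.mul_inv_cancel hs₀ hs
  have htt := ENNReal.mul_inv_cancel ht₀ ht
  calc 2 = 2 * (s * s⁻¹) * (t * t⁻¹) := by rw [hss, htt, mul_one, mul_one]
    _ = 2 * s * t * (s⁻¹ * t⁻¹) := by ring
    _ ≤ (s ^ 2 + t ^ 2) * (s⁻¹ * t⁻¹) := by gcongr; exact two_mul_le_add_sq s t
    _ = t⁻¹ * s * (s * s⁻¹) + s⁻¹ * t * (t * t⁻¹) := by ring
    _ = s⁻¹ * t + t⁻¹ * s := by rw [hss, htt, mul_one, mul_one, add_comm]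

lemma rpow_two_inv_sq (x : ℝ≥0∞) : (x ^ (2⁻¹ : ℝ)) ^ 2 = x := by
  simpa using rpow_inv_natCast_pow two_ne_zero x

lemma mul_inv_rpow_two_inv_mul_inv_rpow_two_inv_le_one {a b c : ℝ≥0∞} (ha : c ≤ a) (hb : c ≤ b) :
    c * ((a ^ (2⁻¹ : ℝ))⁻¹ * (b ^ (2⁻¹ : ℝ))⁻¹) ≤ 1 := by
  have hsqrt_div_le_one {x : ℝ≥0∞} (hx : c ≤ x) : c ^ (2⁻¹ : ℝ) * (x ^ (2⁻¹ : ℝ))⁻¹ ≤ 1 :=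
    ENNReal.div_le_of_le_mul (by rw [one_mul]; gcongr)
  calc c * ((a ^ (2⁻¹ : ℝ))⁻¹ * (b ^ (2⁻¹ : ℝ))⁻¹)
      = (c ^ (2⁻¹ : ℝ) * (a ^ (2⁻¹ : ℝ))⁻¹) * (c ^ (2⁻¹ : ℝ) * (b ^ (2⁻¹ : ℝ))⁻¹) := by
        nth_rw 1 [← rpow_two_inv_sq c]; ring
    _ ≤ 1 * 1 := mul_le_mul' (hsqrt_div_le_one ha) (hsqrt_div_le_one hb)
    _ = 1 := one_mul 1

end ENNReal

section SymmetricRelation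

variable {α : Type*} [MeasurableSpace α]

noncomputable def sectionMass (ν : Measure α) (T : Set (α × α)) (x : α) : ℝ≥0∞ :=
  ν (Prod.mk x ⁻¹' T)

noncomputable def sqrtSectionMass (ν : Measure α) (T : Set (α × α)) (x : α) : ℝ≥0∞ :=
  sectionMass ν T x ^ (2⁻¹ : ℝ)

/-- On `T` this is `∞` where `sectionMass ν T x = 0`; that happens only on a `ν.prod ν`-null set,
and `0 * ∞ = 0` keeps the integral bounds valid there. -/
noncomputable def normalizedKernel (ν : Measure α) (T : Set (α × α)) (x v : α) : ℝ≥0∞ :=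
  T.indicator 1 (x, v) * (sqrtSectionMass ν T x)⁻¹

variable {ν : Measure α} {T D : Set (α × α)}

lemma sqrtSectionMass_ne_zero {x : α} (hx : sectionMass ν T x ≠ 0) : sqrtSectionMass ν T x ≠ 0 := by
  simp [sqrtSectionMass, ENNReal.rpow_eq_zero_iff, hx]

lemma lintegral_normalizedKernel_mul_normalizedKernel_le (hT : MeasurableSet T)
    (hTD : ∀ x y v, (x, v) ∈ T → (y, v) ∈ T → (x, y) ∈ D) (x y : α) :
    ∫⁻ v, normalizedKernel ν T x v * normalizedKernel ν T y v ∂ν ≤ D.indicator 1 (x, y) := by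
  have hinter : MeasurableSet (Prod.mk x ⁻¹' T ∩ Prod.mk y ⁻¹' T) :=
    (measurable_prodMk_left hT).inter (measurable_prodMk_left hT)
  have hk (v : α) : normalizedKernel ν T x v * normalizedKernel ν T y v =
      (Prod.mk x ⁻¹' T ∩ Prod.mk y ⁻¹' T).indicator 1 v *
        ((sqrtSectionMass ν T x)⁻¹ * (sqrtSectionMass ν T y)⁻¹) := by
    by_cases hx : (x, v) ∈ T <;> by_cases hy : (y, v) ∈ T <;> simp [normalizedKernel, hx, hy]
  simp_rw [hk]
  rw [lintegral_mul_const _ (measurable_one.indicator hinter), lintegral_indicator_one hinter]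
  by_cases hxy : (x, y) ∈ D
  · rw [Set.indicator_of_mem hxy]
    exact ENNReal.mul_inv_rpow_two_inv_mul_inv_rpow_two_inv_le_one
      (measure_mono Set.inter_subset_left) (measure_mono Set.inter_subset_right)
  · have hempty : Prod.mk x ⁻¹' T ∩ Prod.mk y ⁻¹' T = ∅ :=
      Set.eq_empty_of_forall_notMem fun v hv => hxy (hTD x y v hv.1 hv.2)
    simp [hempty]

variable [IsFiniteMeasure ν]

@[fun_prop]
lemma measurable_sqrtSectionMass (hT : MeasurableSet T) : Measurable (sqrtSectionMass ν T) :=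
  (measurable_measure_prodMk_left hT).pow_const _

@[fun_prop]
lemma measurable_normalizedKernel (hT : MeasurableSet T) :
    Measurable (Function.uncurry (normalizedKernel ν T)) :=
  (measurable_one.indicator hT).mul (by fun_prop)

lemma sqrtSectionMass_ne_top (x : α) : sqrtSectionMass ν T x ≠ ∞ :=
  ENNReal.rpow_ne_top_of_nonneg (by norm_num) (measure_ne_top _ _)

lemma lintegral_sqrtSectionMass_sq (hT : MeasurableSet T) :
    ∫⁻ x, sqrtSectionMass ν T x ^ 2 ∂ν = ν.prod ν T := by
  simp only [sqrtSectionMass, ENNReal.rpow_two_inv_sq, sectionMass, Measure.prod_apply hT]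

lemma ae_sectionMass_ne_zero (hT : MeasurableSet T) :
    ∀ᵐ z ∂ν.prod ν, z ∈ T → sectionMass ν T z.1 ≠ 0 := by
  have hmeas : MeasurableSet {z : α × α | z ∈ T → sectionMass ν T z.1 ≠ 0} :=
    hT.imp ((measurable_measure_prodMk_left hT (measurableSet_singleton 0)).compl.preimage
      measurable_fst)
  refine (Measure.ae_prod_mem_iff_ae_ae_mem hmeas).2 (ae_of_all _ fun x => ?_)
  by_cases hx : sectionMass ν T x = 0
  · exact (measure_eq_zero_iff_ae_notMem.1 hx).mono fun v hv hvT => absurd hvT hv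
  · exact ae_of_all _ fun _ _ => hx

lemma measure_prod_le_lintegral_normalizedKernel_mul_sqrtSectionMass (hT : MeasurableSet T)
    (hsymm : Prod.swap ⁻¹' T = T) :
    ν.prod ν T ≤ ∫⁻ z, normalizedKernel ν T z.1 z.2 * sqrtSectionMass ν T z.2 ∂ν.prod ν := by
  set F : α × α → ℝ≥0∞ := fun z => normalizedKernel ν T z.1 z.2 * sqrtSectionMass ν T z.2
  have hF : Measurable F := by fun_prop
  have hswap_mem {z : α × α} (hz : z ∈ T) : z.swap ∈ T := by rwa [← hsymm] at hz
  have hne₁ := ae_sectionMass_ne_zero hT (ν := ν)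
  have hne₂ : ∀ᵐ z ∂ν.prod ν, z ∈ T → sectionMass ν T z.2 ≠ 0 := by
    rw [← Measure.prod_swap] at hne₁
    filter_upwards [ae_of_ae_map measurable_swap.aemeasurable hne₁] with z hz hzT
    exact hz (hswap_mem hzT)
  have hamgm : ∀ᵐ z ∂ν.prod ν, 2 * T.indicator 1 z ≤ F z + F z.swap := by
    filter_upwards [hne₁, hne₂] with z hz₁ hz₂
    by_cases hz : z ∈ T
    · simp only [F, normalizedKernel, Prod.mk.eta, Prod.fst_swap, Prod.snd_swap,
        Set.indicator_of_mem hz, Set.indicator_of_mem (hswap_mem hz), Pi.one_apply, one_mul,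
        mul_one]
      exact ENNReal.two_le_inv_mul_add_inv_mul (sqrtSectionMass_ne_zero (hz₁ hz))
        (sqrtSectionMass_ne_top _) (sqrtSectionMass_ne_zero (hz₂ hz)) (sqrtSectionMass_ne_top _)
    · simp [Set.indicator_of_notMem hz]
  have h := lintegral_mono_ae hamgm
  rw [lintegral_const_mul _ (measurable_one.indicator hT), lintegral_indicator_one hT,
    lintegral_add_left hF, lintegral_prod_swap F, ← two_mul] at h
  exact (ENNReal.mul_le_mul_iff_right two_ne_zero ENNReal.ofNat_ne_top).1 h

lemma lintegral_sq_lintegral_normalizedKernel_le (hT : MeasurableSet T) (hD : MeasurableSet D)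
    (hTD : ∀ x y v, (x, v) ∈ T → (y, v) ∈ T → (x, y) ∈ D) :
    ∫⁻ v, (∫⁻ x, normalizedKernel ν T x v ∂ν) ^ 2 ∂ν ≤ ν.prod ν D := by
  set k := normalizedKernel ν T
  calc ∫⁻ v, (∫⁻ x, k x v ∂ν) ^ 2 ∂ν = ∫⁻ v, ∫⁻ w, k w.1 v * k w.2 v ∂ν.prod ν ∂ν := by
        congr! 2 with v
        rw [sq]
        exact (lintegral_prod_mul (f := (k · v)) (g := (k · v)) (by fun_prop) (by fun_prop)).symm
    _ = ∫⁻ w, ∫⁻ v, k w.1 v * k w.2 v ∂ν ∂ν.prod ν := lintegral_lintegral_swap (by fun_prop)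
    _ ≤ ∫⁻ w, D.indicator 1 w ∂ν.prod ν :=
        lintegral_mono fun w => lintegral_normalizedKernel_mul_normalizedKernel_le hT hTD w.1 w.2
    _ = ν.prod ν D := lintegral_indicator_one hD

theorem measure_prod_self_le_of_symmetric (hT : MeasurableSet T) (hD : MeasurableSet D)
    (hsymm : Prod.swap ⁻¹' T = T) (hTD : ∀ x y v, (x, v) ∈ T → (y, v) ∈ T → (x, y) ∈ D) :
    ν.prod ν T ≤ ν.prod ν D := by
  set r := sqrtSectionMass ν T
  set S : α → ℝ≥0∞ := fun v => ∫⁻ x, normalizedKernel ν T x v ∂ν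
  have hS : Measurable S := Measurable.lintegral_prod_left (measurable_normalizedKernel hT)
  have hfubini : ∫⁻ z, normalizedKernel ν T z.1 z.2 * r z.2 ∂ν.prod ν = ∫⁻ v, S v * r v ∂ν := by
    rw [lintegral_prod_symm _ (by fun_prop)]
    exact lintegral_congr fun v => lintegral_mul_const (r v) (by fun_prop)
  have hp_top : ν.prod ν T ≠ ∞ := measure_ne_top _ _
  refine (ENNReal.add_le_add_iff_right hp_top).1 ?_
  calc ν.prod ν T + ν.prod ν T = 2 * ν.prod ν T := (two_mul _).symm
    _ ≤ 2 * ∫⁻ v, S v * r v ∂ν := by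
        rw [← hfubini]
        gcongr
        exact measure_prod_le_lintegral_normalizedKernel_mul_sqrtSectionMass hT hsymm
    _ = ∫⁻ v, 2 * S v * r v ∂ν := by
        rw [← lintegral_const_mul _ (by fun_prop)]
        simp only [mul_assoc]
    _ ≤ ∫⁻ v, S v ^ 2 + r v ^ 2 ∂ν := lintegral_mono fun v => ENNReal.two_mul_le_add_sq _ _
    _ = ∫⁻ v, S v ^ 2 ∂ν + ∫⁻ v, r v ^ 2 ∂ν := lintegral_add_left (by fun_prop) _
    _ ≤ ν.prod ν D + ν.prod ν T := by
        rw [lintegral_sqrtSectionMass_sq hT]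
        gcongr
        exact lintegral_sq_lintegral_normalizedKernel_le hT hD hTD

end SymmetricRelation

lemma measure_prod_norm_add_le_le_measure_prod_norm_sub_le {E : Type*} [NormedAddCommGroup E]
    [MeasurableSpace E] [BorelSpace E] [SecondCountableTopology E] (ν : Measure E)
    [IsFiniteMeasure ν] {a b : ℝ} (hab : 2 * b ≤ a) :
    ν.prod ν {z | ‖z.1 + z.2‖ ≤ b} ≤ ν.prod ν {z | ‖z.1 - z.2‖ ≤ a} := by
  refine measure_prod_self_le_of_symmetric (measurableSet_le (by fun_prop) measurable_const)
    (measurableSet_le (by fun_prop) measurable_const) ?_ fun x y v hx hy => ?_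
  · ext z
    simp [add_comm]
  · calc ‖x - y‖ = ‖(x + v) - (y + v)‖ := by rw [add_sub_add_right_eq_sub]
      _ ≤ ‖x + v‖ + ‖y + v‖ := norm_sub_le _ _
      _ ≤ a := by linarith [hx.out, hy.out]

lemma ProbabilityTheory.IndepFun.measure_preimage_prodMk_eq_prod_map {Ω β : Type*}
    [MeasurableSpace Ω] [MeasurableSpace β] {μ : Measure Ω} [IsFiniteMeasure μ] {X Y : Ω → β}
    (hX : Measurable X) (hY : Measurable Y) (hindep : IndepFun X Y μ)
    (hid : IdentDistrib X Y μ μ) {S : Set (β × β)} (hS : MeasurableSet S) :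
    μ ((fun ω => (X ω, Y ω)) ⁻¹' S) = (μ.map X).prod (μ.map X) S := by
  rw [← Measure.map_apply (hX.prodMk hY) hS,
    (indepFun_iff_map_prod_eq_prod_map_map hX.aemeasurable hY.aemeasurable).1 hindep, hid.map_eq]

theorem stmt2 {Ω : Type*} [MeasurableSpace Ω] (μ : Measure Ω) [IsProbabilityMeasure μ]
    (a b : ℝ) (hb : 0 < b) (hba : b ≤ a / 2)
    (X Y : Ω → ℝ) (hX : Measurable X) (hY : Measurable Y)
    (hindep : IndepFun X Y μ) (hid : IdentDistrib X Y μ μ) :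
    μ {ω | |X ω + Y ω| ≤ b} ≤ (⌈2 * b / a⌉₊ : ℝ≥0∞) * μ {ω | |X ω - Y ω| ≤ a} ∧
      μ {ω | |X ω + Y ω| ≤ b} ≤ μ {ω | |X ω - Y ω| ≤ a} := by
  have ha : 0 < a := by linarith
  have hle : μ {ω | |X ω + Y ω| ≤ b} ≤ μ {ω | |X ω - Y ω| ≤ a} :=
    calc μ {ω | |X ω + Y ω| ≤ b} = (μ.map X).prod (μ.map X) {z | |z.1 + z.2| ≤ b} :=
          hindep.measure_preimage_prodMk_eq_prod_map hX hY hid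
            (S := {z | |z.1 + z.2| ≤ b}) (measurableSet_le (by fun_prop) measurable_const)
      _ ≤ (μ.map X).prod (μ.map X) {z | |z.1 - z.2| ≤ a} :=
          measure_prod_norm_add_le_le_measure_prod_norm_sub_le _ (by linarith)
      _ = μ {ω | |X ω - Y ω| ≤ a} :=
          (hindep.measure_preimage_prodMk_eq_prod_map hX hY hid
            (S := {z | |z.1 - z.2| ≤ a}) (measurableSet_le (by fun_prop) measurable_const)).symm
  have hceil : ⌈2 * b / a⌉₊ = 1 := by
    refine le_antisymm (Nat.ceil_le.2 ?_) (Nat.one_le_ceil_iff.2 (by positivity))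
    rw [Nat.cast_one, div_le_one ha]
    linarith
  exact ⟨by simpa [hceil] using hle, hle⟩
end

section
/- Let (Ω, B) be a measurable space and f : Ω × Ω → ℝ a bounded symmetric jointly measurable function. Then the following are equivalent: (i) for every probability measure μ on B, ∬ f(x,y) dμ(x) dμ(y) > 0; (ii) for every probability measure μ on B, μ({x ∈ Ω : ∫ f(x,y) dμ(y) > 0}) > 0. -/
/-!
Write `F_ν x = ∫ f (x, y) dν(y)` and `I ν = ∫ F_ν dν`. By symmetry, adding a point mass `s δ_x`
to `ν` changes `I` by `2 s F_ν x + s² f (x, x)`, so if `I ≥ m` on probability measures and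
`I ν ≤ m + ε`, comparing with the normalised `(ν + s δ_x) / (1 + s)` gives
`F_ν x ≥ m - ε / (2 s) - s C` for every `x`.

(i) ⇒ (ii) is immediate: if `F_μ ≤ 0` μ-a.e. then `I μ = ∫ F_μ dμ ≤ 0`. Conversely, assume (ii).
If `m = inf I < 0`, take a near-minimiser `ν`. Then `F_ν` is almost `≥ m` everywhere while its
mean is almost `m`, so by Markov's inequality the set `{F_ν > m / 2}` has small `ν`-mass; hence
conditioning `ν` on `G = {F_ν ≤ m / 2}` gives a probability measure whose potential is `≤ 0` on
`G`, contradicting (ii). So `I ≥ 0`, and if `I μ = 0` then `μ` is a minimiser, so `F_μ ≥ 0`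
everywhere; with `∫ F_μ dμ = 0` this forces `F_μ = 0` μ-a.e., contradicting (ii) again.
-/

open MeasureTheory ProbabilityTheory
open scoped NNReal ENNReal

namespace MeasureTheory

variable {Ω : Type*} [MeasurableSpace Ω]

lemma measure_setOf_pos_eq_zero_iff {μ : Measure Ω} {g : Ω → ℝ} :
    μ {x | 0 < g x} = 0 ↔ ∀ᵐ x ∂μ, g x ≤ 0 := by
  simp [ae_iff]

lemma mul_measureReal_lt_le_integral_sub {μ : Measure Ω} [IsProbabilityMeasure μ] {g : Ω → ℝ}
    (hg : Integrable g μ) {a c : ℝ} (hga : ∀ x, a ≤ g x) (hac : a ≤ c) :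
    (c - a) * μ.real {x | c < g x} ≤ ∫ x, g x ∂μ - a :=
  calc (c - a) * μ.real {x | c < g x} ≤ (c - a) * μ.real {x | c - a ≤ g x - a} :=
        mul_le_mul_of_nonneg_left
          (measureReal_mono fun x (hx : c < g x) => show c - a ≤ g x - a by linarith)
          (sub_nonneg.2 hac)
    _ ≤ ∫ x, g x - a ∂μ :=
        mul_meas_ge_le_integral_of_nonneg (ae_of_all _ fun x => sub_nonneg.2 (hga x))
          (hg.sub (integrable_const a)) _
    _ = ∫ x, g x ∂μ - a := by simp [integral_sub hg (integrable_const a)]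

end MeasureTheory

namespace SymmetricKernel

variable {Ω : Type*} [MeasurableSpace Ω] {f : Ω × Ω → ℝ} {C : ℝ}

noncomputable def potential (f : Ω × Ω → ℝ) (μ : Measure Ω) (x : Ω) : ℝ := ∫ y, f (x, y) ∂μ

noncomputable def energy (f : Ω × Ω → ℝ) (μ : Measure Ω) : ℝ := ∫ x, potential f μ x ∂μ

lemma measurable_potential (hf : Measurable f) (μ : Measure Ω) [SFinite μ] :
    Measurable (potential f μ) :=
  hf.stronglyMeasurable.integral_prod_right'.measurable

lemma integrable_comp_prodMk_left (hf : Measurable f) (hC : ∀ p, |f p| ≤ C) (μ : Measure Ω)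
    [IsFiniteMeasure μ] (x : Ω) : Integrable (fun y => f (x, y)) μ :=
  .of_bound (hf.comp measurable_prodMk_left).aestronglyMeasurable C (ae_of_all _ fun _ => hC _)

lemma abs_potential_le (hC : ∀ p, |f p| ≤ C) (μ : Measure Ω) [IsFiniteMeasure μ] (x : Ω) :
    |potential f μ x| ≤ C * μ.real Set.univ :=
  norm_integral_le_of_norm_le_const (f := fun y => f (x, y)) (ae_of_all _ fun y => hC (x, y))

lemma integrable_potential (hf : Measurable f) (hC : ∀ p, |f p| ≤ C) (μ ν : Measure Ω)
    [IsFiniteMeasure μ] [IsFiniteMeasure ν] : Integrable (potential f μ) ν :=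
  .of_bound (measurable_potential hf μ).aestronglyMeasurable _
    (ae_of_all _ fun x => abs_potential_le hC μ x)

lemma abs_energy_le (hC : ∀ p, |f p| ≤ C) (μ : Measure Ω) [IsProbabilityMeasure μ] :
    |energy f μ| ≤ C := by
  simpa [energy] using norm_integral_le_of_norm_le_const (f := potential f μ) (C := C)
    (ae_of_all μ fun x => by simpa using abs_potential_le hC μ x)

lemma potential_smul (c : ℝ≥0) (μ : Measure Ω) (x : Ω) :
    potential f (c • μ) x = c * potential f μ x :=
  integral_smul_nnreal_measure _ c

lemma energy_smul (c : ℝ≥0) (μ : Measure Ω) :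
    energy f (c • μ) = c ^ 2 * energy f μ := by
  simp only [energy, potential_smul, integral_smul_nnreal_measure, integral_const_mul,
    NNReal.smul_def, smul_eq_mul]
  ring

lemma potential_add_smul_dirac (hf : Measurable f) (hC : ∀ p, |f p| ≤ C) (ν : Measure Ω)
    [IsFiniteMeasure ν] (s : ℝ≥0) (x₀ x : Ω) :
    potential f (ν + s • Measure.dirac x₀) x = potential f ν x + s * f (x, x₀) := by
  rw [potential, integral_add_measure (integrable_comp_prodMk_left hf hC ν x)
    (integrable_comp_prodMk_left hf hC _ x), integral_smul_nnreal_measure,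
    integral_dirac' (fun y => f (x, y)) x₀ (hf.comp measurable_prodMk_left).stronglyMeasurable]
  rfl

lemma energy_add_smul_dirac (hf : Measurable f) (hC : ∀ p, |f p| ≤ C)
    (hsymm : ∀ x y, f (x, y) = f (y, x)) (ν : Measure Ω) [IsFiniteMeasure ν] (s : ℝ≥0)
    (x₀ : Ω) :
    energy f (ν + s • Measure.dirac x₀) =
      energy f ν + 2 * s * potential f ν x₀ + s ^ 2 * f (x₀, x₀) := by
  have hint : Integrable (fun x => potential f ν x + s * f (x₀, x)) ν :=
    (integrable_potential hf hC ν ν).add ((integrable_comp_prodMk_left hf hC ν x₀).const_mul _)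
  have hmeas : Measurable fun x => potential f ν x + s * f (x₀, x) :=
    (measurable_potential hf ν).add ((hf.comp measurable_prodMk_left).const_mul _)
  simp only [energy, potential_add_smul_dirac hf hC ν s x₀, hsymm _ x₀]
  rw [integral_add_measure hint
      (integrable_dirac' hmeas.stronglyMeasurable enorm_lt_top).smul_measure_nnreal,
    integral_smul_nnreal_measure, integral_dirac' _ _ hmeas.stronglyMeasurable,
    integral_add (integrable_potential hf hC ν ν)
      ((integrable_comp_prodMk_left hf hC ν x₀).const_mul _), integral_const_mul,
    NNReal.smul_def, smul_eq_mul, potential]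
  ring

lemma le_potential_of_energy_le (hf : Measurable f) (hC : ∀ p, |f p| ≤ C)
    (hsymm : ∀ x y, f (x, y) = f (y, x)) {m ε : ℝ}
    (hmin : ∀ μ : Measure Ω, IsProbabilityMeasure μ → m ≤ energy f μ) (hmC : -C ≤ m)
    (ν : Measure Ω) [IsProbabilityMeasure ν] (hν : energy f ν ≤ m + ε) {s : ℝ} (hs : 0 < s)
    (x : Ω) : m - ε / (2 * s) - s * C ≤ potential f ν x := by
  lift s to ℝ≥0 using hs.le
  have hρ : IsProbabilityMeasure ((1 + s)⁻¹ • (ν + s • Measure.dirac x)) := by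
    constructor
    rw [Measure.smul_apply, Measure.add_apply, Measure.smul_apply, measure_univ, measure_univ,
      ENNReal.smul_def, ENNReal.smul_def, smul_eq_mul, smul_eq_mul, mul_one]
    exact_mod_cast (inv_mul_cancel₀ (by positivity) : ((1 + s)⁻¹ * (1 + s) : ℝ≥0) = 1)
  have hmix := hmin _ hρ
  rw [energy_smul, energy_add_smul_dirac hf hC hsymm, NNReal.coe_inv, NNReal.coe_add,
    NNReal.coe_one, inv_pow, ← div_eq_inv_mul, le_div_iff₀ (by positivity)] at hmix
  have hfxx : f (x, x) ≤ C := (le_abs_self _).trans (hC _)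
  have hsC : s ^ 2 * (-C) ≤ s ^ 2 * m := mul_le_mul_of_nonneg_left hmC (sq_nonneg _)
  have key : 2 * s * (m - ε / (2 * s) - s * C) ≤ 2 * s * potential f ν x := by
    rw [mul_sub, mul_sub, mul_div_cancel₀ _ (by positivity)]
    nlinarith [mul_le_mul_of_nonneg_left hfxx (sq_nonneg (s : ℝ))]
  exact le_of_mul_le_mul_left key (by positivity)

lemma potential_cond_nonpos (hf : Measurable f) (hC : ∀ p, |f p| ≤ C) (ν : Measure Ω)
    [IsFiniteMeasure ν] {G : Set Ω} (hG : MeasurableSet G) {x : Ω}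
    (hx : potential f ν x + C * ν.real Gᶜ ≤ 0) : potential f ν[|G] x ≤ 0 := by
  have hsplit : ∫ y in G, f (x, y) ∂ν + ∫ y in Gᶜ, f (x, y) ∂ν = potential f ν x :=
    integral_add_compl hG (integrable_comp_prodMk_left hf hC ν x)
  have hcompl : |∫ y in Gᶜ, f (x, y) ∂ν| ≤ C * ν.real Gᶜ := by
    simpa using norm_integral_le_of_norm_le_const (μ := ν.restrict Gᶜ)
      (f := fun y => f (x, y)) (ae_of_all _ fun y => hC (x, y))
  rw [potential, ProbabilityTheory.cond, integral_smul_measure, smul_eq_mul]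
  exact mul_nonpos_of_nonneg_of_nonpos ENNReal.toReal_nonneg
    (by linarith [neg_abs_le (∫ y in Gᶜ, f (x, y) ∂ν)])

lemma exists_isProbabilityMeasure_ae_potential_nonpos (hf : Measurable f)
    (hC : ∀ p, |f p| ≤ C) (hsymm : ∀ x y, f (x, y) = f (y, x)) {m s : ℝ}
    (hmin : ∀ μ : Measure Ω, IsProbabilityMeasure μ → m ≤ energy f μ) (hmC : -C ≤ m)
    (hm : m < 0) (hs : 0 < s) (hs₁ : s ≤ 1) (hsm : 10 * s * C ^ 2 ≤ m ^ 2)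
    (ν : Measure Ω) [IsProbabilityMeasure ν] (hν : energy f ν ≤ m + s ^ 2 * C) :
    ∃ ρ : Measure Ω, IsProbabilityMeasure ρ ∧ ∀ᵐ x ∂ρ, potential f ρ x ≤ 0 := by
  have hC₀ : 0 < C := by linarith
  have hlow : ∀ x, m - 3 / 2 * s * C ≤ potential f ν x := fun x => by
    convert le_potential_of_energy_le hf hC hsymm hmin hmC ν hν hs x using 1
    field_simp
    ring
  set G := {x | potential f ν x ≤ m / 2}
  have hG : MeasurableSet G := measurableSet_le (measurable_potential hf ν) measurable_const
  set θ := ν.real Gᶜ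
  have hmarkov : (m / 2 - (m - 3 / 2 * s * C)) * θ ≤ energy f ν - (m - 3 / 2 * s * C) := by
    have hGc : Gᶜ = {x | m / 2 < potential f ν x} := by ext; simp [G]
    rw [show θ = ν.real {x | m / 2 < potential f ν x} by rw [← hGc]]
    exact mul_measureReal_lt_le_integral_sub (integrable_potential hf hC ν ν) hlow
      (by nlinarith)
  have hθ₀ : 0 ≤ θ := measureReal_nonneg
  have hθ₁ : θ ≤ 1 := measureReal_le_one
  have hθ : -m / 2 * θ ≤ 5 / 2 * s * C := by nlinarith [mul_nonneg hs.le hC₀.le]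
  have hCθ : C * θ ≤ -m / 2 := by
    refine le_of_mul_le_mul_left ?_ (by linarith : 0 < -m / 2)
    nlinarith [mul_le_mul_of_nonneg_left hθ hC₀.le]
  have hνG : ν G ≠ 0 := by
    intro h0
    have : θ = 1 := by simp [θ, probReal_compl_eq_one_sub hG, measureReal_def, h0]
    nlinarith
  refine ⟨ν[|G], cond_isProbabilityMeasure hνG, ?_⟩
  filter_upwards [ae_cond_mem hG] with x (hx : potential f ν x ≤ m / 2)
  exact potential_cond_nonpos hf hC ν hG (by linarith)

lemma energy_nonneg_of_forall_measure_potential_pos (hf : Measurable f)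
    (hC : ∀ p, |f p| ≤ C) (hsymm : ∀ x y, f (x, y) = f (y, x))
    (h : ∀ μ : Measure Ω, IsProbabilityMeasure μ → 0 < μ {x | 0 < potential f μ x})
    (μ : Measure Ω) [IsProbabilityMeasure μ] : 0 ≤ energy f μ := by
  by_contra! hneg
  have : Nonempty {ν : Measure Ω // IsProbabilityMeasure ν} := ⟨⟨μ, inferInstance⟩⟩
  have henergy (ν : {ν : Measure Ω // IsProbabilityMeasure ν}) : -C ≤ energy f ν := by
    have := ν.2
    exact (abs_le.1 (abs_energy_le hC ν)).1
  set m := ⨅ ν : {ν : Measure Ω // IsProbabilityMeasure ν}, energy f ν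
  have hbdd : BddBelow (Set.range fun ν : {ν : Measure Ω // IsProbabilityMeasure ν} =>
      energy f ν) := ⟨-C, Set.forall_mem_range.2 henergy⟩
  have hmin (ν : Measure Ω) (hν : IsProbabilityMeasure ν) : m ≤ energy f ν :=
    ciInf_le hbdd ⟨ν, hν⟩
  have hmC : -C ≤ m := le_ciInf henergy
  have hm : m < 0 := (hmin μ inferInstance).trans_lt hneg
  have hC₀ : 0 < C := by linarith
  set s := m ^ 2 / (10 * C ^ 2)
  have hs : 0 < s := div_pos (by nlinarith) (by positivity)
  have hs₁ : s ≤ 1 := div_le_one_of_le₀ (by nlinarith) (by positivity)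
  have hsm : 10 * s * C ^ 2 ≤ m ^ 2 := le_of_eq (by simp only [s]; field_simp)
  obtain ⟨⟨ν, hν⟩, hνm⟩ :=
    exists_lt_of_ciInf_lt (lt_add_of_pos_right m (mul_pos (pow_pos hs 2) hC₀))
  obtain ⟨ρ, hρ, hρae⟩ := exists_isProbabilityMeasure_ae_potential_nonpos hf hC hsymm hmin hmC
    hm hs hs₁ hsm ν hνm.le
  exact (h ρ hρ).ne' (measure_setOf_pos_eq_zero_iff.2 hρae)

lemma potential_nonneg_of_energy_nonpos (hf : Measurable f) (hC : ∀ p, |f p| ≤ C)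
    (hsymm : ∀ x y, f (x, y) = f (y, x))
    (hmin : ∀ μ : Measure Ω, IsProbabilityMeasure μ → 0 ≤ energy f μ)
    (μ : Measure Ω) [IsProbabilityMeasure μ] (hμ : energy f μ ≤ 0) (x : Ω) :
    0 ≤ potential f μ x := by
  have hC₀ : 0 ≤ C := (abs_nonneg _).trans (hC (x, x))
  by_contra! hneg
  have hs : 0 < -potential f μ x / (C + 1) := div_pos (neg_pos.2 hneg) (by linarith)
  have hvar := le_potential_of_energy_le hf hC hsymm hmin (by linarith) μ
    (by simpa using hμ) hs x
  have hsC : -potential f μ x / (C + 1) * (C + 1) = -potential f μ x :=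
    div_mul_cancel₀ _ (by linarith)
  simp only [zero_div, zero_sub] at hvar
  nlinarith

lemma measure_potential_pos_pos_of_energy_pos (μ : Measure Ω) (h : 0 < energy f μ) :
    0 < μ {x | 0 < potential f μ x} :=
  pos_iff_ne_zero.2 fun h0 =>
    h.not_ge (integral_nonpos_of_ae (measure_setOf_pos_eq_zero_iff.1 h0))

lemma energy_pos_of_forall_measure_potential_pos (hf : Measurable f)
    (hC : ∀ p, |f p| ≤ C) (hsymm : ∀ x y, f (x, y) = f (y, x))
    (h : ∀ μ : Measure Ω, IsProbabilityMeasure μ → 0 < μ {x | 0 < potential f μ x})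
    (μ : Measure Ω) [IsProbabilityMeasure μ] : 0 < energy f μ := by
  have hmin := energy_nonneg_of_forall_measure_potential_pos hf hC hsymm h
  by_contra! hle
  have hzero : potential f μ =ᵐ[μ] 0 :=
    (integral_eq_zero_iff_of_nonneg (potential_nonneg_of_energy_nonpos hf hC hsymm hmin μ hle)
      (integrable_potential hf hC μ μ)).1 (hle.antisymm (hmin μ))
  exact (h μ inferInstance).ne' (measure_setOf_pos_eq_zero_iff.2 (hzero.mono fun _ hx => hx.le))

end SymmetricKernel

theorem stmt4 {Ω : Type*} [MeasurableSpace Ω] (f : Ω × Ω → ℝ)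
    (hf : Measurable f) (hbdd : ∃ C : ℝ, ∀ p, |f p| ≤ C)
    (hsymm : ∀ x y, f (x, y) = f (y, x)) :
    (∀ μ : Measure Ω, IsProbabilityMeasure μ →
        0 < ∫ x, ∫ y, f (x, y) ∂μ ∂μ) ↔
      (∀ μ : Measure Ω, IsProbabilityMeasure μ →
        0 < μ {x | 0 < ∫ y, f (x, y) ∂μ}) := by
  obtain ⟨C, hC⟩ := hbdd
  exact ⟨fun h μ _ => SymmetricKernel.measure_potential_pos_pos_of_energy_pos μ (h μ ‹_›),
    fun h μ _ => SymmetricKernel.energy_pos_of_forall_measure_potential_pos hf hC hsymm h μ⟩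
end

section
/- Let ‖·‖₁ and ‖·‖₂ be two norms on ℝ^d with closed balls B₁(r), B₂(r) centered at the origin, and let X, Y be i.i.d. ℝ^d-valued random variables. For any a, b > 0, P(‖X + Y‖₂ ≤ b) ≤ N(B₂(b), B₁(a), 1/2) · P(‖X − Y‖₁ ≤ a), where N(F, K, 1/2) = inf{|A| : F ⊆ A + (1/2)K}. -/
/-!
For i.i.d. `X, Y` with law `ν`, put `G x = ν {z | x + z ∈ S}` and `H x = ν {y | x - y ∈ D}`.
When `S - S ⊆ D`, every `(x, z)` with `x + z ∈ S` has `G z ≤ H x` and `G x ≤ H z`, because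
`(x + z) - (z + w) = x - w`. Integrating AM-GM,
`2 ≤ G z / G x + G x / G z ≤ H x / G x + H z / G z`,
over this symmetric set against `ν ⊗ ν` gives `P(X + Y ∈ S) ≤ P(X - Y ∈ D)`. A cover
`B₂(b) ⊆ A + ½ B₁(a)` and a union bound over the translates `c + ½ B₁(a)`, whose difference sets
lie in `B₁(a)`, give the theorem; when no finite cover exists, it suffices that
`P(X - Y ∈ B₁(a)) > 0`.
-/

open MeasureTheory ProbabilityTheory
open scoped ENNReal Pointwise

/-- The `ρ`-covering number of `F` by `K`: the least cardinality of a set `A` with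
`F ⊆ A + ρ • K` (and `⊤` if no finite set works). -/
noncomputable def coverNum {E : Type*} [AddCommGroup E] [Module ℝ E]
    (F K : Set E) (ρ : ℝ) : ℕ∞ :=
  sInf {n : ℕ∞ | ∃ A : Finset E, (A.card : ℕ∞) = n ∧ F ⊆ (A : Set E) + ρ • K}

/-- `IsNorm n` asserts that `n : ℝ^d → ℝ` is a norm. -/
def IsNorm {d : ℕ} (n : (Fin d → ℝ) → ℝ) : Prop :=
  (∀ x, n x = 0 ↔ x = 0) ∧ (∀ (c : ℝ) x, n (c • x) = |c| * n x) ∧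
    ∀ x y, n (x + y) ≤ n x + n y

open Filter Topology Set

namespace IsNorm

variable {d : ℕ} {n : (Fin d → ℝ) → ℝ}

lemma map_zero (h : IsNorm n) : n 0 = 0 := (h.1 0).2 rfl

lemma map_neg (h : IsNorm n) (x : Fin d → ℝ) : n (-x) = n x := by
  simpa using h.2.1 (-1) x

lemma convexOn (h : IsNorm n) : ConvexOn ℝ univ n := by
  refine ⟨convex_univ, fun x _ y _ s t hs ht _ => ?_⟩
  calc n (s • x + t • y) ≤ n (s • x) + n (t • y) := h.2.2 _ _
    _ = s * n x + t * n y := by rw [h.2.1, h.2.1, abs_of_nonneg hs, abs_of_nonneg ht]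

protected lemma continuous (h : IsNorm n) : Continuous n :=
  h.convexOn.locallyLipschitz.continuous

lemma half_smul_sub_half_smul_subset (h : IsNorm n) (a : ℝ) :
    (1 / 2 : ℝ) • {x | n x ≤ a} - (1 / 2 : ℝ) • {x | n x ≤ a} ⊆ {x | n x ≤ a} := by
  rintro _ ⟨_, ⟨u, hu : n u ≤ a, rfl⟩, _, ⟨v, hv : n v ≤ a, rfl⟩, rfl⟩
  have hhalf : |(1 / 2 : ℝ)| = 1 / 2 := abs_of_pos one_half_pos
  calc n ((1 / 2 : ℝ) • u - (1 / 2 : ℝ) • v)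
      ≤ n ((1 / 2 : ℝ) • u) + n (-((1 / 2 : ℝ) • v)) := by rw [sub_eq_add_neg]; exact h.2.2 _ _
    _ = 1 / 2 * n u + 1 / 2 * n v := by rw [h.map_neg, h.2.1, h.2.1, hhalf]
    _ ≤ a := by linarith

end IsNorm

lemma ENNReal.two_le_div_add_div {u v : ℝ≥0∞} (hu : u ≠ 0) (hu' : u ≠ ⊤) (hv' : v ≠ ⊤) :
    2 ≤ v / u + u / v := by
  rcases eq_or_ne v 0 with rfl | hv
  · simp [ENNReal.div_zero hu]
  have hu0 : 0 < u.toReal := ENNReal.toReal_pos hu hu'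
  have hv0 : 0 < v.toReal := ENNReal.toReal_pos hv hv'
  rw [← ENNReal.ofReal_toReal (a := v / u + u / v) (by finiteness), ENNReal.toReal_add
    (ENNReal.div_ne_top hv' hu) (ENNReal.div_ne_top hu' hv), ENNReal.toReal_div, ENNReal.toReal_div,
    ← ENNReal.ofReal_ofNat, ENNReal.ofReal_le_ofReal_iff (by positivity)]
  rw [div_add_div _ _ hu0.ne' hv0.ne', le_div_iff₀ (by positivity)]
  nlinarith [sq_nonneg (u.toReal - v.toReal)]

section Anticoncentration

variable {α : Type*} [MeasurableSpace α] [AddCommGroup α] [MeasurableAdd₂ α]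
  {ν : Measure α} [IsFiniteMeasure ν] {S D : Set α}

lemma setLIntegral_add_mem_comp_fst (hS : MeasurableSet S) {φ : α → ℝ≥0∞} (hφ : Measurable φ) :
    ∫⁻ p in {p : α × α | p.1 + p.2 ∈ S}, φ p.1 ∂ν.prod ν = ∫⁻ x, φ x * ν {z | x + z ∈ S} ∂ν := by
  have hE : MeasurableSet {p : α × α | p.1 + p.2 ∈ S} := measurable_add hS
  rw [← lintegral_indicator hE,
    lintegral_prod _ ((hφ.comp measurable_fst).indicator hE (f := fun p => φ p.1)).aemeasurable]
  refine lintegral_congr fun x => ?_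
  have hSx : MeasurableSet {z | x + z ∈ S} := measurable_const_add x hS
  rw [← lintegral_indicator_const hSx]
  rfl

lemma setLIntegral_add_mem_comp_snd (hS : MeasurableSet S) {φ : α → ℝ≥0∞} (hφ : Measurable φ) :
    ∫⁻ p in {p : α × α | p.1 + p.2 ∈ S}, φ p.2 ∂ν.prod ν =
      ∫⁻ p in {p : α × α | p.1 + p.2 ∈ S}, φ p.1 ∂ν.prod ν := by
  have hE : MeasurableSet {p : α × α | p.1 + p.2 ∈ S} := measurable_add hS
  have hswap : Prod.swap ⁻¹' {p : α × α | p.1 + p.2 ∈ S} = {p | p.1 + p.2 ∈ S} := by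
    ext p; simp [add_comm]
  calc ∫⁻ p in {p : α × α | p.1 + p.2 ∈ S}, φ p.2 ∂ν.prod ν
      = ∫⁻ p in Prod.swap ⁻¹' {p : α × α | p.1 + p.2 ∈ S}, φ p.swap.2 ∂ν.prod ν :=
        (Measure.measurePreserving_swap.setLIntegral_comp_preimage hE (hφ.comp measurable_snd)).symm
    _ = _ := by rw [hswap]; rfl

lemma ae_restrict_measure_add_mem_ne_zero (hS : MeasurableSet S) :
    ∀ᵐ p ∂(ν.prod ν).restrict {p : α × α | p.1 + p.2 ∈ S}, ν {z | p.1 + z ∈ S} ≠ 0 := by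
  set G : α → ℝ≥0∞ := fun x => ν {z | x + z ∈ S}
  have hZ : Measurable ((G ⁻¹' {0}).indicator (1 : α → ℝ≥0∞)) :=
    measurable_one.indicator (measurable_measure_prodMk_left (measurable_add hS)
      (measurableSet_singleton 0))
  have hnull : ∫⁻ p in {p : α × α | p.1 + p.2 ∈ S}, (G ⁻¹' {0}).indicator 1 p.1 ∂ν.prod ν = 0 := by
    rw [setLIntegral_add_mem_comp_fst hS hZ]
    refine (lintegral_congr fun x => ?_).trans lintegral_zero
    rcases eq_or_ne (G x) 0 with hx | hx
    · exact mul_eq_zero_of_right _ hx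
    · exact mul_eq_zero_of_left (indicator_of_notMem (s := G ⁻¹' {0}) hx 1) _
  filter_upwards [(lintegral_eq_zero_iff (hZ.comp measurable_fst)).1 hnull] with p hp hGp
  simp [G, hGp] at hp

theorem prod_add_mem_le_prod_sub_mem [MeasurableSub₂ α] (hS : MeasurableSet S)
    (hD : MeasurableSet D) (hSD : S - S ⊆ D) :
    ν.prod ν {p | p.1 + p.2 ∈ S} ≤ ν.prod ν {p | p.1 - p.2 ∈ D} := by
  set E := {p : α × α | p.1 + p.2 ∈ S}
  have hE : MeasurableSet E := measurable_add hS
  set G : α → ℝ≥0∞ := fun x => ν {z | x + z ∈ S}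
  set H : α → ℝ≥0∞ := fun x => ν {y | x - y ∈ D}
  have hG : Measurable G := measurable_measure_prodMk_left hE
  have hH : Measurable H := measurable_measure_prodMk_left (measurable_sub hD)
  have hGH : ∀ x z, x + z ∈ S → G z ≤ H x := fun x z hxz => measure_mono fun w hw => by
    have hsub := hSD (sub_mem_sub hxz hw)
    rwa [show x + z - (z + w) = x - w by abel] at hsub
  set φ : α → ℝ≥0∞ := fun x => H x / G x
  have hφ : Measurable φ := hH.div hG
  have hAMGM : ∀ᵐ p ∂(ν.prod ν).restrict E, 2 ≤ φ p.1 + φ p.2 := by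
    filter_upwards [ae_restrict_measure_add_mem_ne_zero hS, ae_restrict_mem hE] with p hp hpE
    calc 2 ≤ G p.2 / G p.1 + G p.1 / G p.2 :=
          ENNReal.two_le_div_add_div hp (measure_ne_top _ _) (measure_ne_top _ _)
      _ ≤ H p.1 / G p.1 + H p.2 / G p.2 := by
          gcongr
          exacts [hGH _ _ hpE, hGH _ _ (add_comm p.1 p.2 ▸ hpE)]
  have hφ_fst : ∫⁻ p in E, φ p.1 ∂ν.prod ν ≤ ∫⁻ x, H x ∂ν := by
    rw [setLIntegral_add_mem_comp_fst hS hφ]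
    exact lintegral_mono fun x => (mul_comm _ _).trans_le ENNReal.mul_div_le
  rw [Measure.prod_apply (show MeasurableSet {p : α × α | p.1 - p.2 ∈ D} from measurable_sub hD)]
  refine (ENNReal.mul_le_mul_iff_right two_ne_zero ENNReal.ofNat_ne_top).1 ?_
  calc 2 * ν.prod ν E = ∫⁻ _ in E, 2 ∂ν.prod ν := by rw [setLIntegral_const, mul_comm]
    _ ≤ ∫⁻ p in E, φ p.1 + φ p.2 ∂ν.prod ν := lintegral_mono_ae hAMGM
    _ = 2 * ∫⁻ p in E, φ p.1 ∂ν.prod ν := by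
      rw [lintegral_add_left (f := fun p : α × α => φ p.1) (hφ.comp measurable_fst),
        setLIntegral_add_mem_comp_snd hS hφ, two_mul]
    _ ≤ 2 * ∫⁻ x, H x ∂ν := by gcongr

theorem prod_add_mem_finset_add_le [MeasurableSub₂ α] (A : Finset α) {T : Set α}
    (hT : MeasurableSet T) (hD : MeasurableSet D) (hTD : T - T ⊆ D) :
    ν.prod ν {p | p.1 + p.2 ∈ (A : Set α) + T} ≤ A.card * ν.prod ν {p | p.1 - p.2 ∈ D} := by
  have hcover : {p : α × α | p.1 + p.2 ∈ (A : Set α) + T} ⊆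
      ⋃ c ∈ A, {p | p.1 + p.2 ∈ {x | x - c ∈ T}} := by
    rintro p ⟨c, hc, t, ht, hct⟩
    exact mem_biUnion hc (by simpa [← hct] using ht)
  have htranslate (c : α) : {x | x - c ∈ T} - {x | x - c ∈ T} ⊆ D := by
    rintro _ ⟨x, hx, y, hy, rfl⟩
    simpa using hTD (sub_mem_sub hx hy)
  calc ν.prod ν {p | p.1 + p.2 ∈ (A : Set α) + T}
      ≤ ∑ c ∈ A, ν.prod ν {p | p.1 + p.2 ∈ {x | x - c ∈ T}} :=
        (measure_mono hcover).trans (measure_biUnion_finset_le _ _)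
    _ ≤ ∑ _c ∈ A, ν.prod ν {p | p.1 - p.2 ∈ D} := Finset.sum_le_sum fun c _ =>
        prod_add_mem_le_prod_sub_mem (measurable_sub_const c hT) hD (htranslate c)
    _ = A.card * ν.prod ν {p | p.1 - p.2 ∈ D} := by rw [Finset.sum_const, nsmul_eq_mul]

end Anticoncentration

theorem prod_sub_mem_pos {α : Type*} [TopologicalSpace α] [AddGroup α] [ContinuousSub α]
    [SecondCountableTopology α] [MeasurableSpace α] (ν : Measure α) [SFinite ν] [NeZero ν]
    {U : Set α} (hU : U ∈ 𝓝 0) : 0 < ν.prod ν {p | p.1 - p.2 ∈ U} := by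
  obtain ⟨x, hx⟩ := ν.nonempty_support (NeZero.ne ν)
  have hUx : {p : α × α | p.1 - p.2 ∈ U} ∈ 𝓝 x ×ˢ 𝓝 x := by
    rw [← nhds_prod_eq]
    exact continuous_sub.continuousAt.preimage_mem_nhds (by simpa using hU)
  obtain ⟨B, hB, hBU⟩ := mem_prod_self_iff.1 hUx
  have hBpos : 0 < ν B := (Measure.mem_support_iff_forall x).1 hx B hB
  calc 0 < ν B * ν B := ENNReal.mul_pos hBpos.ne' hBpos.ne'
    _ = ν.prod ν (B ×ˢ B) := (Measure.prod_prod _ _).symm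
    _ ≤ ν.prod ν {p | p.1 - p.2 ∈ U} := measure_mono hBU

theorem le_coverNum_mul {E : Type*} [AddCommGroup E] [Module ℝ E] {F K : Set E} {ρ : ℝ}
    {p q : ℝ≥0∞} (hq : q ≠ 0) (h : ∀ A : Finset E, F ⊆ A + ρ • K → p ≤ A.card * q) :
    p ≤ coverNum F K ρ * q := by
  rcases Set.eq_empty_or_nonempty
    {n : ℕ∞ | ∃ A : Finset E, (A.card : ℕ∞) = n ∧ F ⊆ (A : Set E) + ρ • K} with hempty | hne
  · simp [coverNum, hempty, ENNReal.top_mul hq]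
  · obtain ⟨A, hA, hcover⟩ := csInf_mem hne
    rw [coverNum, ← hA]
    simpa using h A hcover

theorem ProbabilityTheory.IdentDistrib.map_prodMk_eq_prod {Ω β : Type*} [MeasurableSpace Ω]
    [MeasurableSpace β] {μ : Measure Ω} [IsFiniteMeasure μ] {X Y : Ω → β}
    (hid : IdentDistrib X Y μ μ) (hindep : IndepFun X Y μ) :
    μ.map (fun ω => (X ω, Y ω)) = (μ.map X).prod (μ.map X) := by
  rw [(indepFun_iff_map_prod_eq_prod_map_map hid.aemeasurable_fst hid.aemeasurable_snd).1 hindep,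
    hid.map_eq]

theorem stmt7_general {d : ℕ} (n₁ n₂ : (Fin d → ℝ) → ℝ) (hn₁ : IsNorm n₁)
    {Ω : Type*} [MeasurableSpace Ω] (μ : Measure Ω) [IsProbabilityMeasure μ]
    (X Y : Ω → (Fin d → ℝ))
    (hindep : IndepFun X Y μ) (hid : IdentDistrib X Y μ μ)
    (a b : ℝ) (ha : 0 < a) :
    μ {ω | n₂ (X ω + Y ω) ≤ b} ≤
      (coverNum {x | n₂ x ≤ b} {x | n₁ x ≤ a} (1 / 2) : ℝ≥0∞) *
        μ {ω | n₁ (X ω - Y ω) ≤ a} := by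
  set ν := μ.map X
  have : IsProbabilityMeasure ν := Measure.isProbabilityMeasure_map hid.aemeasurable_fst
  have hpair : AEMeasurable (fun ω => (X ω, Y ω)) μ :=
    hid.aemeasurable_fst.prodMk hid.aemeasurable_snd
  have hlaw := hid.map_prodMk_eq_prod hindep
  have hK : IsClosed {x | n₁ x ≤ a} := isClosed_le hn₁.continuous continuous_const
  have hdiff : μ {ω | n₁ (X ω - Y ω) ≤ a} = ν.prod ν {p | p.1 - p.2 ∈ {x | n₁ x ≤ a}} := by
    rw [← hlaw, Measure.map_apply_of_aemeasurable hpair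
      (s := {p | p.1 - p.2 ∈ {x | n₁ x ≤ a}}) (measurable_sub hK.measurableSet)]
    rfl
  have hK_nhds : {x | n₁ x ≤ a} ∈ 𝓝 0 :=
    hn₁.continuous.continuousAt.preimage_mem_nhds (Iic_mem_nhds (by rwa [hn₁.map_zero]))
  rw [hdiff]
  refine le_coverNum_mul (prod_sub_mem_pos ν hK_nhds).ne' fun A hA => ?_
  calc μ {ω | n₂ (X ω + Y ω) ≤ b}
      ≤ μ ((fun ω => (X ω, Y ω)) ⁻¹'
          {p | p.1 + p.2 ∈ (A : Set (Fin d → ℝ)) + (1 / 2 : ℝ) • {x | n₁ x ≤ a}}) :=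
        measure_mono fun ω hω => hA hω
    _ ≤ ν.prod ν {p | p.1 + p.2 ∈ (A : Set (Fin d → ℝ)) + (1 / 2 : ℝ) • {x | n₁ x ≤ a}} :=
        hlaw ▸ Measure.le_map_apply hpair _
    _ ≤ A.card * ν.prod ν {p | p.1 - p.2 ∈ {x | n₁ x ≤ a}} :=
        prod_add_mem_finset_add_le A (hK.smul_of_ne_zero (by norm_num)).measurableSet
          hK.measurableSet (hn₁.half_smul_sub_half_smul_subset a)

theorem stmt7 {d : ℕ} (n₁ n₂ : (Fin d → ℝ) → ℝ) (hn₁ : IsNorm n₁) (hn₂ : IsNorm n₂)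
    {Ω : Type*} [MeasurableSpace Ω] (μ : Measure Ω) [IsProbabilityMeasure μ]
    (X Y : Ω → (Fin d → ℝ)) (hX : Measurable X) (hY : Measurable Y)
    (hindep : IndepFun X Y μ) (hid : IdentDistrib X Y μ μ)
    (a b : ℝ) (ha : 0 < a) (hb : 0 < b) :
    μ {ω | n₂ (X ω + Y ω) ≤ b} ≤
      (coverNum {x | n₂ x ≤ b} {x | n₁ x ≤ a} (1 / 2) : ℝ≥0∞) *
        μ {ω | n₁ (X ω - Y ω) ≤ a} :=
  stmt7_general n₁ n₂ hn₁ μ X Y hindep hid a b ha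
end

section
/- For every real a > 0 and every ε > 0, there exist i.i.d. real random variables X, Y (finitely supported, depending on a, ε) such that P(|X+Y| ≤ 1) ≥ (⌈2/a⌉ − ε) · P(|X−Y| ≤ a). Consequently the constant ⌈2b/a⌉ in the inequality P(|X+Y| ≤ b) < ⌈2b/a⌉·P(|X−Y| ≤ a) cannot be improved. -/
/-!
Let `m = ⌈2/a⌉₊`, so that `(m - 1) a < 2` and the spacing `d = (2 + a)/m` exceeds `a`.
Take `X`, `Y` i.i.d. uniform on the `2n` points `i d` (`1 ≤ i ≤ n`) and `i d - (1 + a)`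
(`1 - n ≤ i ≤ 0`). Distinct points are at least `d > a` apart, so `|X - Y| ≤ a` only on the `2n`
diagonal pairs. For `i ≥ 1 > j` the sum of the two points is `(i + j) d - (1 + a)`, which lies in
`[-1, 1]` for each of the `m` values `i + j = 1, …, m`; this gives at least `2m(n + 1 - m)` pairs
with `|X + Y| ≤ 1`, and the ratio of the two counts tends to `m` as `n → ∞`.
-/

open MeasureTheory ProbabilityTheory Finset
open scoped ENNReal

theorem card_filter_subtype_prod {α : Type*} (s : Finset α) (P : α → α → Prop) [DecidableRel P] :
    #{ω : s × s | P ω.1 ω.2} = #{p ∈ s ×ˢ s | P p.1 p.2} := by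
  refine card_bij (fun ω _ ↦ (ω.1.1, ω.2.1)) (fun ω hω ↦ ?_) (fun ω _ ω' _ h ↦ ?_) (fun p hp ↦ ?_)
  · simp_all
  · simp only [Prod.mk.injEq] at h
    exact Prod.ext (Subtype.ext h.1) (Subtype.ext h.2)
  · simp only [mem_filter, mem_product] at hp
    exact ⟨(⟨p.1, hp.1.1⟩, ⟨p.2, hp.1.2⟩), by simpa using hp.2, rfl⟩

theorem PMF.toMeasure_uniformOfFintype_prod (ι : Type*) [Fintype ι] [Nonempty ι] [MeasurableSpace ι]
    [MeasurableSingletonClass ι] :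
    (PMF.uniformOfFintype ι).toMeasure.prod (PMF.uniformOfFintype ι).toMeasure
      = (PMF.uniformOfFintype (ι × ι)).toMeasure := by
  refine Measure.ext_of_singleton fun ω ↦ ?_
  rw [← Set.singleton_prod_singleton, Measure.prod_prod, Set.singleton_prod_singleton]
  simp only [PMF.toMeasure_apply_singleton _ _ (measurableSet_singleton _),
    PMF.uniformOfFintype_apply, Fintype.card_prod, Nat.cast_mul]
  exact (ENNReal.mul_inv (by simp) (by simp)).symm

theorem exists_iid_uniform_on_finset {α : Type} (s : Finset α) (hs : s.Nonempty) (f : α → ℝ) :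
    ∃ (Ω : Type) (_ : MeasurableSpace Ω) (μ : Measure Ω) (_ : IsProbabilityMeasure μ)
      (X Y : Ω → ℝ), Measurable X ∧ Measurable Y ∧ IndepFun X Y μ ∧
        IdentDistrib X Y μ μ ∧ (Set.range X).Finite ∧
        ∀ (P : ℝ → ℝ → Prop) [DecidableRel P],
          μ {ω | P (X ω) (Y ω)} = #{p ∈ s ×ˢ s | P (f p.1) (f p.2)} / #s ^ 2 := by
  have : Nonempty s := hs.to_subtype
  let _ : MeasurableSpace s := ⊤
  have : MeasurableSingletonClass s := ⟨fun _ ↦ trivial⟩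
  let ν := (PMF.uniformOfFintype s).toMeasure
  let g : s → ℝ := fun i ↦ f i
  have hg : Measurable g := measurable_of_countable g
  refine ⟨s × s, inferInstance, ν.prod ν, inferInstance, fun ω ↦ g ω.1, fun ω ↦ g ω.2,
    hg.comp measurable_fst, hg.comp measurable_snd, indepFun_prod hg hg,
    ⟨(hg.comp measurable_fst).aemeasurable, (hg.comp measurable_snd).aemeasurable, ?_⟩,
    Set.finite_range _, fun P _ ↦ ?_⟩
  · change (ν.prod ν).map (g ∘ Prod.fst) = (ν.prod ν).map (g ∘ Prod.snd)
    rw [← Measure.map_map hg measurable_fst, ← Measure.map_map hg measurable_snd,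
      Measure.map_fst_prod, Measure.map_snd_prod]
  · rw [PMF.toMeasure_uniformOfFintype_prod,
      PMF.toMeasure_uniformOfFintype_apply _ (Set.toFinite _).measurableSet, Fintype.card_subtype]
    simp only [Set.mem_ofPred_eq, Fintype.card_prod, Fintype.card_coe, g]
    rw [card_filter_subtype_prod s (fun x y ↦ P (f x) (f y)), Nat.cast_mul, sq]

def gapLattice (d r : ℝ) (i : ℤ) : ℝ := i * d - if i ≤ 0 then r else 0

section gapLattice

variable {d r : ℝ}

theorem le_gapLattice_sub (hd : 0 ≤ d) (hr : 0 ≤ r) {i j : ℤ} (hij : i < j) :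
    d ≤ gapLattice d r j - gapLattice d r i := by
  have hji : (1 : ℝ) ≤ j - i := by exact_mod_cast (by omega : (1 : ℤ) ≤ j - i)
  unfold gapLattice
  split_ifs <;> first | omega | nlinarith

theorem eq_of_abs_gapLattice_sub_le {a : ℝ} (had : a < d) (hr : 0 ≤ r) {i j : ℤ}
    (h : |gapLattice d r i - gapLattice d r j| ≤ a) : i = j := by
  have hd : 0 ≤ d := by linarith [(abs_nonneg _).trans h]
  rw [abs_le] at h
  rcases lt_trichotomy i j with hij | hij | hij
  · linarith [le_gapLattice_sub hd hr hij]
  · exact hij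
  · linarith [le_gapLattice_sub hd hr hij]

theorem gapLattice_add {i j : ℤ} (hi : 0 < i) (hj : j ≤ 0) :
    gapLattice d r i + gapLattice d r j = (i + j) * d - r := by
  simp [gapLattice, hj, hi.not_ge]
  ring

theorem abs_gapLattice_add_le_one {m : ℕ} (hd : 0 ≤ d) (hrd : r - 1 ≤ d) (hmd : m * d ≤ r + 1)
    {i k : ℤ} (hk : 1 ≤ k) (hkm : k ≤ m) (hki : k ≤ i) :
    |gapLattice d r i + gapLattice d r (k - i)| ≤ 1 := by
  have hk' : (1 : ℝ) ≤ k := by exact_mod_cast hk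
  have hkm' : (k : ℝ) ≤ m := by exact_mod_cast hkm
  rw [gapLattice_add (by omega) (by omega), Int.cast_sub, add_sub_cancel, abs_le]
  constructor <;> nlinarith

end gapLattice

theorem card_filter_abs_sub_le_le_card {α : Type*} (s : Finset α) {f : α → ℝ} {a : ℝ}
    (hf : ∀ i j, |f i - f j| ≤ a → i = j) : #{p ∈ s ×ˢ s | |f p.1 - f p.2| ≤ a} ≤ #s := by
  refine card_le_card_of_injOn Prod.fst (fun p hp ↦ ?_) (fun p hp q hq hpq ↦ ?_)
  · exact (mem_product.1 (mem_filter.1 hp).1).1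
  · simp only [coe_filter, Set.mem_ofPred_eq] at hp hq
    have := hf _ _ hp.2
    have := hf _ _ hq.2
    exact Prod.ext hpq (by simp_all)

theorem card_filter_abs_gapLattice_add_le_one {d r : ℝ} {m n : ℕ} (hd : 0 ≤ d) (hrd : r - 1 ≤ d)
    (hmd : m * d ≤ r + 1) (hmn : m ≤ n) :
    2 * (m * (n + 1 - m)) ≤ #{p ∈ Icc (1 - n : ℤ) n ×ˢ Icc (1 - n : ℤ) n |
      |gapLattice d r p.1 + gapLattice d r p.2| ≤ 1} := by
  set T := (Icc (1 : ℤ) m ×ˢ Icc (m : ℤ) n).image fun q ↦ (q.2, q.1 - q.2)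
  have hT : #T = m * (n + 1 - m) := by
    rw [card_image_of_injective _ fun q q' h ↦ ?_, card_product, Int.card_Icc, Int.card_Icc,
      show ((m : ℤ) + 1 - 1).toNat = m by omega, show ((n : ℤ) + 1 - m).toNat = n + 1 - m by omega]
    · simp only [Prod.mk.injEq] at h
      exact Prod.ext (by omega) h.1
  have hT_mem : ∀ p ∈ T, ∃ k i : ℤ, 1 ≤ k ∧ k ≤ m ∧ m ≤ i ∧ i ≤ n ∧ p = (i, k - i) := by
    simp only [T, forall_mem_image, mem_product, mem_Icc]
    exact fun q hq ↦ ⟨q.1, q.2, hq.1.1, hq.1.2, hq.2.1, hq.2.2, rfl⟩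
  have hdisj : Disjoint T (T.image Prod.swap) := by
    refine disjoint_left.2 fun p hp hp' ↦ ?_
    obtain ⟨q, hq, rfl⟩ := mem_image.1 hp'
    obtain ⟨k, i, hk, -, hi, -, h⟩ := hT_mem _ hp
    obtain ⟨k', i', hk', hkm', hi', -, rfl⟩ := hT_mem _ hq
    simp only [Prod.swap_prod_mk, Prod.ext_iff] at h
    omega
  have hsub : T ∪ T.image Prod.swap ⊆ {p ∈ Icc (1 - n : ℤ) n ×ˢ Icc (1 - n : ℤ) n |
      |gapLattice d r p.1 + gapLattice d r p.2| ≤ 1} := by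
    refine union_subset (fun p hp ↦ ?_) (fun p hp ↦ ?_)
    · obtain ⟨k, i, hk, hkm, hi, hin, rfl⟩ := hT_mem p hp
      simp only [mem_filter, mem_product, mem_Icc]
      exact ⟨⟨⟨by omega, by omega⟩, by omega, by omega⟩,
        abs_gapLattice_add_le_one hd hrd hmd hk hkm (by omega)⟩
    · obtain ⟨q, hq, rfl⟩ := mem_image.1 hp
      obtain ⟨k, i, hk, hkm, hi, hin, rfl⟩ := hT_mem q hq
      simp only [mem_filter, mem_product, mem_Icc, Prod.fst_swap, Prod.snd_swap]
      exact ⟨⟨⟨by omega, by omega⟩, by omega, by omega⟩,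
        add_comm (gapLattice d r i) _ ▸ abs_gapLattice_add_le_one hd hrd hmd hk hkm (by omega)⟩
  calc 2 * (m * (n + 1 - m)) = #T + #(T.image Prod.swap) := by
        rw [card_image_of_injective _ Prod.swap_injective, hT]; ring
    _ = #(T ∪ T.image Prod.swap) := (card_union_of_disjoint hdisj).symm
    _ ≤ _ := card_le_card hsub

theorem sub_mul_card_filter_abs_gapLattice_sub_le_le {a ε : ℝ} (ha : 0 < a) {m n : ℕ} (hm : 0 < m)
    (hma : (m - 1) * a < 2) (hmn : m ≤ n) (hεn : m * (m - 1) ≤ ε * n) :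
    let x := gapLattice ((2 + a) / m) (1 + a)
    let s := Icc (1 - n : ℤ) n
    (m - ε) * #{p ∈ s ×ˢ s | |x p.1 - x p.2| ≤ a} ≤ (#{p ∈ s ×ˢ s | |x p.1 + x p.2| ≤ 1} : ℝ) := by
  intro x s
  have hm' : (0 : ℝ) < m := by exact_mod_cast hm
  have had : a < (2 + a) / m := by rw [lt_div_iff₀ hm']; linarith
  have hmd : m * ((2 + a) / m) = (1 + a) + 1 := by rw [mul_div_cancel₀ _ hm'.ne']; ring
  have hD : (#{p ∈ s ×ˢ s | |x p.1 - x p.2| ≤ a} : ℝ) ≤ 2 * n := by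
    have := card_filter_abs_sub_le_le_card s
      fun _ _ h ↦ eq_of_abs_gapLattice_sub_le (r := 1 + a) had (by linarith) h
    rw [Int.card_Icc, show ((n : ℤ) + 1 - (1 - n)).toNat = 2 * n by omega] at this
    exact_mod_cast this
  have hS : 2 * (m * (n + 1 - m)) ≤ (#{p ∈ s ×ˢ s | |x p.1 + x p.2| ≤ 1} : ℝ) := by
    have := card_filter_abs_gapLattice_add_le_one (by linarith) (by linarith) hmd.le hmn
    rw [← Nat.cast_le (α := ℝ)] at this
    push_cast [Nat.cast_sub (hmn.trans n.le_succ)] at this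
    linarith
  rcases le_or_gt (m - ε : ℝ) 0 with hle | hlt
  · exact (mul_nonpos_of_nonpos_of_nonneg hle (Nat.cast_nonneg _)).trans (Nat.cast_nonneg _)
  · calc (m - ε) * #{p ∈ s ×ˢ s | |x p.1 - x p.2| ≤ a} ≤ (m - ε) * (2 * n) := by gcongr
      _ ≤ 2 * (m * (n + 1 - m)) := by linarith
      _ ≤ _ := hS

theorem exists_iid_measure_abs_add_le_one_ge (a ε : ℝ) (ha : 0 < a) (hε : 0 < ε) {m : ℕ}
    (hm : 0 < m) (hma : (m - 1) * a < 2) :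
    ∃ (Ω : Type) (_ : MeasurableSpace Ω) (μ : Measure Ω) (_ : IsProbabilityMeasure μ)
      (X Y : Ω → ℝ), Measurable X ∧ Measurable Y ∧ IndepFun X Y μ ∧
        IdentDistrib X Y μ μ ∧ (Set.range X).Finite ∧
        ENNReal.ofReal (m - ε) * μ {ω | |X ω - Y ω| ≤ a} ≤ μ {ω | |X ω + Y ω| ≤ 1} := by
  obtain ⟨n₀, hn₀⟩ := exists_nat_ge (m * (m - 1) / ε)
  have hεn : m * (m - 1) ≤ ε * (n₀ + m : ℕ) := by
    rw [div_le_iff₀ hε] at hn₀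
    push_cast
    nlinarith
  have hcount := sub_mul_card_filter_abs_gapLattice_sub_le_le ha hm hma (Nat.le_add_left m n₀) hεn
  obtain ⟨Ω, _, μ, _, X, Y, hX, hY, hXY, hid, hfin, hμ⟩ :=
    exists_iid_uniform_on_finset (Icc (1 - (n₀ + m : ℕ) : ℤ) (n₀ + m : ℕ))
      ⟨0, by simp only [mem_Icc]; omega⟩ (gapLattice ((2 + a) / m) (1 + a))
  refine ⟨Ω, _, μ, ‹_›, X, Y, hX, hY, hXY, hid, hfin, ?_⟩
  rw [hμ fun x y ↦ |x - y| ≤ a, hμ fun x y ↦ |x + y| ≤ 1, ← mul_div_assoc]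
  refine ENNReal.div_le_div_right ?_ _
  rw [← ENNReal.ofReal_natCast, ← ENNReal.ofReal_mul' (Nat.cast_nonneg _), ← ENNReal.ofReal_natCast]
  exact ENNReal.ofReal_le_ofReal hcount

theorem stmt13 (a ε : ℝ) (ha : 0 < a) (hε : 0 < ε) :
    ∃ (Ω : Type) (_ : MeasurableSpace Ω) (μ : Measure Ω) (_ : IsProbabilityMeasure μ)
      (X Y : Ω → ℝ), Measurable X ∧ Measurable Y ∧ IndepFun X Y μ ∧
        IdentDistrib X Y μ μ ∧ (Set.range X).Finite ∧
        ENNReal.ofReal ((⌈2 / a⌉₊ : ℝ) - ε) * μ {ω | |X ω - Y ω| ≤ a} ≤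
          μ {ω | |X ω + Y ω| ≤ 1} := by
  have h2a : 0 < 2 / a := by positivity
  refine exists_iid_measure_abs_add_le_one_ge a ε ha hε (Nat.ceil_pos.2 h2a) ?_
  have := Nat.ceil_lt_add_one h2a.le
  rw [← lt_div_iff₀ ha]
  linarith
end

section
/- In the setting of the discrete example (X uniform on the 2n points x_i = i(1+ε)a, i=1..n, and x_i = i(1+ε)a − r, i=0,−1,…,−n+1, with Y an independent copy), lim_{n→∞} P(|X+Y| ≤ 1)/P(|X−Y| ≤ a) = 1 + ⌊(1−r)/((1+ε)a)⌋ + ⌊(1+r)/((1+ε)a)⌋. -/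
/-!
The points are spaced `c = (1 + ε) a > a` apart (the gap between `x₀` and `x₁` is even `c + r`),
so `|x_i - x_j| ≤ a` only on the diagonal and the denominator is `2n / (2n)²`.
In the numerator, pairs of indices of equal sign satisfy `|x_i + x_j| ≤ 1` only inside a fixed
box, while for `i ≥ 1`, `j ≤ 0` the condition reads `|(i + j) c - r| ≤ 1`, i.e. `i + j` lies in a
window of `K = 1 + ⌊(1 - r) / c⌋ + ⌊(1 + r) / c⌋` integers. Each value of `i + j` is taken by
`n + O(1)` such pairs, so the numerator counts `2Kn + O(1)` pairs and the ratio tends to `K`.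
-/

open MeasureTheory Filter Finset Asymptotics
open scoped ENNReal Topology

theorem prod_smul_sum_dirac_apply {α ι : Type*} [MeasurableSpace α] [MeasurableSingletonClass α]
    (w : ℝ≥0∞) (s : Finset ι) (f : ι → α) {S : Set (α × α)} (hS : MeasurableSet S)
    [DecidablePred (· ∈ S)] :
    ((w • ∑ i ∈ s, Measure.dirac (f i)).prod (w • ∑ i ∈ s, Measure.dirac (f i))) S =
      w * w * #{p ∈ s ×ˢ s | (f p.1, f p.2) ∈ S} := by
  rw [Measure.prod_apply hS, lintegral_smul_measure, lintegral_finsetSum_measure,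
    card_filter, sum_product]
  simp only [lintegral_dirac, Measure.smul_apply, Measure.finsetSum_apply, smul_eq_mul,
    Measure.dirac_apply' _ (measurable_prodMk_left hS), mul_sum, mul_assoc, Nat.cast_sum]
  refine sum_congr rfl fun i _ => sum_congr rfl fun j _ => ?_
  by_cases h : (f i, f j) ∈ S <;> simp [h]

theorem toReal_prod_smul_sum_dirac_div {α ι : Type*} [MeasurableSpace α]
    [MeasurableSingletonClass α] {w : ℝ≥0∞} (hw₀ : w ≠ 0) (hw : w ≠ ∞) (s : Finset ι) (f : ι → α)
    {S T : Set (α × α)} (hS : MeasurableSet S) (hT : MeasurableSet T) [DecidablePred (· ∈ S)]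
    [DecidablePred (· ∈ T)] :
    ((w • ∑ i ∈ s, Measure.dirac (f i)).prod (w • ∑ i ∈ s, Measure.dirac (f i)) S).toReal /
        ((w • ∑ i ∈ s, Measure.dirac (f i)).prod (w • ∑ i ∈ s, Measure.dirac (f i)) T).toReal =
      (#{p ∈ s ×ˢ s | (f p.1, f p.2) ∈ S} : ℝ) / #{p ∈ s ×ˢ s | (f p.1, f p.2) ∈ T} := by
  have hw' : w.toReal ≠ 0 := ENNReal.toReal_ne_zero.2 ⟨hw₀, hw⟩
  rw [prod_smul_sum_dirac_apply w s f hS, prod_smul_sum_dirac_apply w s f hT]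
  simp only [ENNReal.toReal_mul, ENNReal.toReal_natCast]
  exact mul_div_mul_left _ _ (mul_ne_zero hw' hw')

theorem card_filter_abs_sub_le_eq_card {ι : Type*} [DecidableEq ι] (s : Finset ι) (f : ι → ℝ)
    {a : ℝ} (ha : 0 ≤ a)
    (hf : ∀ i j, |f i - f j| ≤ a → i = j) :
    #{p ∈ s ×ˢ s | |f p.1 - f p.2| ≤ a} = #s := by
  convert diag_card s using 2
  ext ⟨i, j⟩
  simp only [mem_filter, mem_product, mem_diag]
  constructor
  · rintro ⟨⟨hi, -⟩, h⟩
    exact ⟨hi, hf i j h⟩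
  · rintro ⟨hi, rfl⟩
    simpa using And.intro hi ha

theorem card_filter_union_product_union {α : Type*} [DecidableEq α] {s t : Finset α}
    (hst : Disjoint s t) (Q : α × α → Prop) [DecidablePred Q] :
    #{p ∈ (s ∪ t) ×ˢ (s ∪ t) | Q p} =
      #{p ∈ s ×ˢ s | Q p} + #{p ∈ s ×ˢ t | Q p} + #{p ∈ t ×ˢ s | Q p} + #{p ∈ t ×ˢ t | Q p} := by
  rw [union_product, product_union, product_union, filter_union, filter_union, filter_union,
    card_union_of_disjoint, card_union_of_disjoint, card_union_of_disjoint, add_assoc]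
  · omega
  all_goals
    try simp only [disjoint_union_left, disjoint_union_right]
    repeat' apply And.intro
    all_goals exact disjoint_filter_filter (disjoint_product.2 (by tauto))

theorem card_filter_product_swap {α β : Type*} (s : Finset α) (t : Finset β) (Q : α × β → Prop)
    [DecidablePred Q] : #{p ∈ t ×ˢ s | Q p.swap} = #{p ∈ s ×ˢ t | Q p} := by
  rw [← map_swap_product, filter_map, card_map]
  rfl

theorem abs_card_filter_add_eq_sub_le (n : ℕ) (s : ℤ) :
    |(#{p ∈ Icc 1 (n : ℤ) ×ˢ Icc (-(n : ℤ) + 1) 0 | p.1 + p.2 = s} : ℤ) - n| ≤ |s| + 1 := by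
  have : {p ∈ Icc 1 (n : ℤ) ×ˢ Icc (-(n : ℤ) + 1) 0 | p.1 + p.2 = s} =
      (Icc (max 1 s) (min n (n - 1 + s))).image fun i => (i, s - i) := by
    ext ⟨i, j⟩
    simp only [mem_filter, mem_product, mem_Icc, mem_image, Prod.mk.injEq]
    constructor
    · rintro ⟨⟨⟨h1, h2⟩, h3, h4⟩, rfl⟩
      exact ⟨i, ⟨by omega, by omega⟩, rfl, by omega⟩
    · rintro ⟨k, ⟨h1, h2⟩, rfl, rfl⟩
      omega
  rw [this, card_image_of_injective _ fun i j h => (Prod.ext_iff.1 h).1, Int.card_Icc]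
  rcases abs_cases s with h | h <;> rw [abs_le] <;> omega

theorem tendsto_div_natCast_of_isBigO_sub_mul {f : ℕ → ℝ} {L : ℝ}
    (h : (fun n => f n - L * n) =O[atTop] fun _ => (1 : ℝ)) :
    Tendsto (fun n => f n / n) atTop (𝓝 L) := by
  have hinv : Tendsto (fun n : ℕ => (n : ℝ)⁻¹) atTop (𝓝 0) :=
    tendsto_inv_atTop_zero.comp tendsto_natCast_atTop_atTop
  have herr : Tendsto (fun n : ℕ => (f n - L * n) * (n : ℝ)⁻¹) atTop (𝓝 0) :=
    (h.mul (isBigO_refl _ _)).trans_tendsto (by simpa using hinv)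
  rw [← add_zero L]
  refine (tendsto_const_nhds.add herr).congr' ?_
  filter_upwards [eventually_ne_atTop 0] with n hn
  field_simp
  ring

theorem abs_intCast_mul_sub_le_one_iff {c : ℝ} (hc : 0 < c) (x : ℝ) (s : ℤ) :
    |(s : ℝ) * c - x| ≤ 1 ↔ s ∈ Icc (-⌊(1 - x) / c⌋) ⌊(1 + x) / c⌋ := by
  rw [mem_Icc, neg_le, Int.le_floor, Int.le_floor, le_div_iff₀ hc, le_div_iff₀ hc, abs_le]
  push_cast
  constructor <;> rintro ⟨h₁, h₂⟩ <;> constructor <;> linarith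

theorem natCast_card_Icc_neg_floor_floor {c : ℝ} (hc : 0 < c) (x : ℝ) :
    (#(Icc (-⌊(1 - x) / c⌋) ⌊(1 + x) / c⌋) : ℝ) = 1 + ⌊(1 - x) / c⌋ + ⌊(1 + x) / c⌋ := by
  have hsum : ⌊(1 - x) / c + (1 + x) / c⌋ - 1 ≤ ⌊(1 - x) / c⌋ + ⌊(1 + x) / c⌋ :=
    Int.le_floor_add_floor _ _
  have hpos : 0 ≤ ⌊(1 - x) / c + (1 + x) / c⌋ := by
    rw [Int.floor_nonneg, ← add_div]
    exact div_nonneg (by linarith) hc.le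
  rw [Int.card_Icc, ← Int.cast_natCast, Int.toNat_of_nonneg (by omega)]
  push_cast
  ring

theorem isBigO_card_filter_add_mem_sub (T : Finset ℤ) :
    (fun n : ℕ => (#{p ∈ Icc 1 (n : ℤ) ×ˢ Icc (-(n : ℤ) + 1) 0 | p.1 + p.2 ∈ T} : ℝ) - #T * n)
      =O[atTop] fun _ => (1 : ℝ) := by
  have hfiber (n : ℕ) : (#{p ∈ Icc 1 (n : ℤ) ×ˢ Icc (-(n : ℤ) + 1) 0 | p.1 + p.2 ∈ T} : ℝ) - #T * n
      = ∑ s ∈ T, ((#{p ∈ Icc 1 (n : ℤ) ×ˢ Icc (-(n : ℤ) + 1) 0 | p.1 + p.2 = s} : ℝ) - n) := by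
    rw [sum_sub_distrib, sum_const, nsmul_eq_mul, ← sum_card_fiberwise_eq_card_filter]
    push_cast
    rfl
  simp_rw [hfiber]
  refine IsBigO.fun_sum fun s _ => isBigO_of_le' (c := |s| + 1) _ fun n => ?_
  have := abs_card_filter_add_eq_sub_le n s
  rw [norm_one, mul_one, Real.norm_eq_abs]
  exact_mod_cast this

def shiftedLattice (c r : ℝ) (i : ℤ) : ℝ := if 1 ≤ i then i * c else i * c - r

namespace shiftedLattice

variable {c r : ℝ} {i j : ℤ}

theorem of_pos (h : 1 ≤ i) : shiftedLattice c r i = i * c := if_pos h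

theorem of_nonpos (h : i ≤ 0) : shiftedLattice c r i = i * c - r := if_neg (by omega)

theorem add_le_of_lt (hc : 0 ≤ c) (hr : 0 ≤ r) (hij : i < j) :
    shiftedLattice c r i + c ≤ shiftedLattice c r j := by
  have hgap : (i : ℝ) * c + c ≤ j * c := by
    have : (i : ℝ) + 1 ≤ j := by exact_mod_cast hij
    nlinarith
  rcases le_or_gt 1 i with hi | hi <;> rcases le_or_gt 1 j with hj | hj
  · rw [of_pos hi, of_pos hj]; linarith
  · omega
  · rw [of_nonpos (by omega), of_pos hj]; linarith
  · rw [of_nonpos (by omega), of_nonpos (by omega)]; linarith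

theorem eq_of_abs_sub_le {a : ℝ} (hr : 0 ≤ r) (hac : a < c)
    (h : |shiftedLattice c r i - shiftedLattice c r j| ≤ a) : i = j := by
  have hc : 0 ≤ c := by linarith [(abs_nonneg _).trans h]
  rw [abs_le] at h
  rcases lt_trichotomy i j with hij | rfl | hij
  · linarith [add_le_of_lt hc hr hij]
  · rfl
  · linarith [add_le_of_lt hc hr hij]

theorem abs_add_le_one_iff (hc : 0 < c) (hi : 1 ≤ i) (hj : j ≤ 0) :
    |shiftedLattice c r i + shiftedLattice c r j| ≤ 1 ↔
      i + j ∈ Icc (-⌊(1 - r) / c⌋) ⌊(1 + r) / c⌋ := by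
  rw [← abs_intCast_mul_sub_le_one_iff hc, of_pos hi, of_nonpos hj]
  push_cast
  ring_nf

theorem mem_Icc_prod_of_abs_add_le_one (hc : 0 < c) (hr : 0 ≤ r) (hij : 1 ≤ i ↔ 1 ≤ j)
    (h : |shiftedLattice c r i + shiftedLattice c r j| ≤ 1) :
    (i, j) ∈ Icc (-⌊c⁻¹⌋) ⌊c⁻¹⌋ ×ˢ Icc (-⌊c⁻¹⌋) ⌊c⁻¹⌋ := by
  suffices |(i : ℝ)| * c ≤ 1 ∧ |(j : ℝ)| * c ≤ 1 by
    have hbox {k : ℤ} (hk : |(k : ℝ)| * c ≤ 1) : k ∈ Icc (-⌊c⁻¹⌋) ⌊c⁻¹⌋ := by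
      rw [mem_Icc, ← abs_le, Int.le_floor, ← one_div, le_div_iff₀ hc]
      exact_mod_cast hk
    exact mem_product.2 ⟨hbox this.1, hbox this.2⟩
  rw [abs_le] at h
  by_cases hi : 1 ≤ i
  · have hj := hij.1 hi
    rw [of_pos hi, of_pos hj] at h
    have hi' : (1 : ℝ) ≤ i := by exact_mod_cast hi
    have hj' : (1 : ℝ) ≤ j := by exact_mod_cast hj
    rw [abs_of_pos (by linarith), abs_of_pos (by linarith)]
    constructor <;> nlinarith
  · have hj : j ≤ 0 := by omega
    rw [of_nonpos (by omega), of_nonpos hj] at h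
    have hi' : (i : ℝ) ≤ 0 := by exact_mod_cast (by omega : i ≤ 0)
    have hj' : (j : ℝ) ≤ 0 := by exact_mod_cast hj
    rw [abs_of_nonpos hi', abs_of_nonpos hj']
    constructor <;> nlinarith

theorem isBigO_card_abs_add_le_one_sub (hc : 0 < c) (hr : 0 ≤ r) :
    (fun n : ℕ => (#{p ∈ Icc (-(n : ℤ) + 1) n ×ˢ Icc (-(n : ℤ) + 1) n |
        |shiftedLattice c r p.1 + shiftedLattice c r p.2| ≤ 1} : ℝ) -
      2 * #(Icc (-⌊(1 - r) / c⌋) ⌊(1 + r) / c⌋) * n) =O[atTop] fun _ => (1 : ℝ) := by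
  set W := Icc (-⌊(1 - r) / c⌋) ⌊(1 + r) / c⌋
  set box := Icc (-⌊c⁻¹⌋) ⌊c⁻¹⌋ ×ˢ Icc (-⌊c⁻¹⌋) ⌊c⁻¹⌋
  have hmixed (n : ℕ) :
      #{p ∈ Icc 1 (n : ℤ) ×ˢ Icc (-(n : ℤ) + 1) 0 |
        |shiftedLattice c r p.1 + shiftedLattice c r p.2| ≤ 1} =
      #{p ∈ Icc 1 (n : ℤ) ×ˢ Icc (-(n : ℤ) + 1) 0 | p.1 + p.2 ∈ W} := by
    refine congrArg card (filter_congr fun p hp => ?_)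
    obtain ⟨h₁, h₂⟩ := mem_product.1 hp
    exact abs_add_le_one_iff hc (mem_Icc.1 h₁).1 (mem_Icc.1 h₂).2
  have hsplit (n : ℕ) :
      #{p ∈ Icc (-(n : ℤ) + 1) n ×ˢ Icc (-(n : ℤ) + 1) n |
        |shiftedLattice c r p.1 + shiftedLattice c r p.2| ≤ 1} =
      #{p ∈ Icc (-(n : ℤ) + 1) 0 ×ˢ Icc (-(n : ℤ) + 1) 0 |
        |shiftedLattice c r p.1 + shiftedLattice c r p.2| ≤ 1} +
      2 * #{p ∈ Icc 1 (n : ℤ) ×ˢ Icc (-(n : ℤ) + 1) 0 | p.1 + p.2 ∈ W} +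
      #{p ∈ Icc 1 (n : ℤ) ×ˢ Icc 1 (n : ℤ) |
        |shiftedLattice c r p.1 + shiftedLattice c r p.2| ≤ 1} := by
    have hI : Icc (-(n : ℤ) + 1) n = Icc (-(n : ℤ) + 1) 0 ∪ Icc 1 n := by
      ext i; simp only [mem_union, mem_Icc]; omega
    have hdisj : Disjoint (Icc (-(n : ℤ) + 1) 0) (Icc 1 n) :=
      disjoint_left.2 fun i h₁ h₂ => by rw [mem_Icc] at h₁ h₂; omega
    have hswap : #{p ∈ Icc (-(n : ℤ) + 1) 0 ×ˢ Icc 1 (n : ℤ) |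
          |shiftedLattice c r p.1 + shiftedLattice c r p.2| ≤ 1} =
        #{p ∈ Icc 1 (n : ℤ) ×ˢ Icc (-(n : ℤ) + 1) 0 |
          |shiftedLattice c r p.1 + shiftedLattice c r p.2| ≤ 1} := by
      rw [← card_filter_product_swap]
      exact congrArg card (filter_congr fun p _ => by rw [Prod.fst_swap, Prod.snd_swap, add_comm])
    rw [hI, card_filter_union_product_union hdisj, hswap, hmixed]
    ring
  have hbounded {s : ℕ → Finset ℤ} (hs : ∀ n, ∀ i ∈ s n, ∀ j ∈ s n, (1 ≤ i ↔ 1 ≤ j)) :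
      (fun n => (#{p ∈ s n ×ˢ s n | |shiftedLattice c r p.1 + shiftedLattice c r p.2| ≤ 1} : ℝ))
        =O[atTop] fun _ => (1 : ℝ) :=
    isBigO_of_le' (c := #box) _ fun n => by
      rw [norm_one, mul_one, Real.norm_natCast, Nat.cast_le]
      refine card_le_card fun p hp => ?_
      obtain ⟨hp, hQ⟩ := mem_filter.1 hp
      obtain ⟨h₁, h₂⟩ := mem_product.1 hp
      exact mem_Icc_prod_of_abs_add_le_one hc hr (hs n _ h₁ _ h₂) hQ
  have hM := hbounded (s := fun n : ℕ => Icc (-(n : ℤ) + 1) 0) fun n i hi j hj => by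
    rw [mem_Icc] at hi hj; omega
  have hP := hbounded (s := fun n : ℕ => Icc 1 (n : ℤ)) fun n i hi j hj => by
    rw [mem_Icc] at hi hj; omega
  refine ((hM.add ((isBigO_card_filter_add_mem_sub W).const_mul_left 2)).add hP).congr_left
    fun n => ?_
  rw [hsplit]
  push_cast
  ring

end shiftedLattice

theorem stmt15_general (a ε r : ℝ) (ha : 0 < a) (hε : 0 < ε) (hr : 0 < r)
    (pt : ℤ → ℝ)
    (hpt : ∀ i : ℤ, pt i = if 1 ≤ i then (i : ℝ) * (1 + ε) * a
      else (i : ℝ) * (1 + ε) * a - r)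
    (μ : ℕ → Measure ℝ)
    (hμ : ∀ n : ℕ, μ n =
      (2 * n : ℝ≥0∞)⁻¹ • ∑ i ∈ Finset.Icc (-(n : ℤ) + 1) (n : ℤ), Measure.dirac (pt i)) :
    Tendsto (fun n : ℕ =>
        (((μ n).prod (μ n)) {p : ℝ × ℝ | |p.1 + p.2| ≤ 1}).toReal /
          (((μ n).prod (μ n)) {p : ℝ × ℝ | |p.1 - p.2| ≤ a}).toReal)
      atTop
      (𝓝 ((1 : ℝ) + (⌊(1 - r) / ((1 + ε) * a)⌋ : ℤ) + (⌊(1 + r) / ((1 + ε) * a)⌋ : ℤ))) := by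
  set c := (1 + ε) * a with hc_def
  have hc : 0 < c := by positivity
  have hpt_eq : pt = shiftedLattice c r := funext fun i => by
    rw [hpt, shiftedLattice, hc_def]
    split_ifs <;> ring
  subst hpt_eq
  have hsep (i j : ℤ) : |shiftedLattice c r i - shiftedLattice c r j| ≤ a → i = j :=
    shiftedLattice.eq_of_abs_sub_le hr.le (by nlinarith)
  have hnum := tendsto_div_natCast_of_isBigO_sub_mul
    (shiftedLattice.isBigO_card_abs_add_le_one_sub hc hr.le)
  rw [← natCast_card_Icc_neg_floor_floor hc r]
  have := hnum.div_const 2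
  rw [mul_div_cancel_left₀ _ two_ne_zero] at this
  refine this.congr' ?_
  filter_upwards [eventually_ge_atTop 1] with n hn
  rw [hμ, toReal_prod_smul_sum_dirac_div (by simp [ENNReal.mul_eq_top]) (by simp; omega) _ _
    (measurableSet_le (by fun_prop) measurable_const) (measurableSet_le (by fun_prop) measurable_const)]
  simp only [Set.mem_ofPred_eq]
  rw [card_filter_abs_sub_le_eq_card _ _ ha.le hsep, Int.card_Icc,
    show ((n : ℤ) + 1 - (-(n : ℤ) + 1)).toNat = 2 * n by omega]
  push_cast
  ring

theorem stmt15 (a ε r : ℝ) (ha : 0 < a) (hε : 0 < ε) (hr : 0 < r)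
    (hr' : r ≤ a * (1 + ε) / 2)
    (pt : ℤ → ℝ)
    (hpt : ∀ i : ℤ, pt i = if 1 ≤ i then (i : ℝ) * (1 + ε) * a
      else (i : ℝ) * (1 + ε) * a - r)
    (μ : ℕ → Measure ℝ)
    (hμ : ∀ n : ℕ, μ n =
      (2 * n : ℝ≥0∞)⁻¹ • ∑ i ∈ Finset.Icc (-(n : ℤ) + 1) (n : ℤ), Measure.dirac (pt i)) :
    Tendsto (fun n : ℕ =>
        (((μ n).prod (μ n)) {p : ℝ × ℝ | |p.1 + p.2| ≤ 1}).toReal /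
          (((μ n).prod (μ n)) {p : ℝ × ℝ | |p.1 - p.2| ≤ a}).toReal)
      atTop
      (𝓝 ((1 : ℝ) + (⌊(1 - r) / ((1 + ε) * a)⌋ : ℤ) + (⌊(1 + r) / ((1 + ε) * a)⌋ : ℤ))) :=
  stmt15_general a ε r ha hε hr pt hpt μ hμ
end
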